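/- arXiv:2101.05148 — 8 statements merged into one kernel-verified Lean document; each statement's English description precedes it below -/
import Mathlib

section
/- Let V be a C² function on [0, z̄] satisfying -（σ²/2）V'' + ρV - H(z, V') = 0 on (0, z̄) with Neumann boundary conditions V'(0) = V'(z̄) = 0, where H(z, λ) = (1-γ)(γ/w)^{γ/(1-γ)} max(0,λ)^{1/(1-γ)} + kλ + z^α/B^{α-1}, with constants σ, ρ, w, B > 0, k ≥ 0, α, γ ∈ (0,1). Then 0 ≤ V(z) ≤ z̄^α/(ρ B^{α-1}) for all z ∈ [0, z̄]. -/
/-!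
Both bounds are instances of one minimum principle for Neumann supersolutions of
`d u'' + G(u') ≤ ρ u` with `d, ρ ≥ 0`: at a minimiser `z₀` of `u` on `[a, b]` the Neumann
conditions force `u'(z₀) = 0`, and `u''` cannot be negative on a one-sided neighbourhood of
`z₀` (otherwise `u'` would leave `0` with the sign that makes `u` decrease away from `z₀`).
So `u'' ≥ 0` at interior points arbitrarily close to `z₀`, where `G(u')` is close to `G 0`;
hence `G 0 ≤ ρ u(z₀) ≤ ρ u`. The lower bound takes `u = V`, dropping the nonnegative source
`z^α / B^(α-1)`; the upper bound takes `u = -V`, bounding the source by its value at `z̄`.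
-/

open Set Filter Topology

section MinimumPrinciple

variable {u : ℝ → ℝ} {a b p q z₀ : ℝ}

theorem lt_of_deriv_deriv_neg_of_deriv_left_eq_zero (hpq : p < q)
    (hu : ContinuousOn u (Icc p q)) (hu' : ContinuousOn (deriv u) (Icc p q))
    (hu'' : ∀ x ∈ Ioo p q, deriv (deriv u) x < 0) (hp : deriv u p = 0) : u q < u p := by
  have hanti : StrictAntiOn (deriv u) (Icc p q) :=
    strictAntiOn_of_deriv_neg (convex_Icc p q) hu' (by rwa [interior_Icc])
  refine strictAntiOn_of_deriv_neg (convex_Icc p q) hu (fun x hx => ?_)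
    (left_mem_Icc.2 hpq.le) (right_mem_Icc.2 hpq.le) hpq
  rw [interior_Icc] at hx
  exact hp ▸ hanti (left_mem_Icc.2 hpq.le) (Ioo_subset_Icc_self hx) hx.1

theorem lt_of_deriv_deriv_neg_of_deriv_right_eq_zero (hpq : p < q)
    (hu : ContinuousOn u (Icc p q)) (hu' : ContinuousOn (deriv u) (Icc p q))
    (hu'' : ∀ x ∈ Ioo p q, deriv (deriv u) x < 0) (hq : deriv u q = 0) : u p < u q := by
  have hanti : StrictAntiOn (deriv u) (Icc p q) :=
    strictAntiOn_of_deriv_neg (convex_Icc p q) hu' (by rwa [interior_Icc])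
  refine strictMonoOn_of_deriv_pos (convex_Icc p q) hu (fun x hx => ?_)
    (left_mem_Icc.2 hpq.le) (right_mem_Icc.2 hpq.le) hpq
  rw [interior_Icc] at hx
  exact hq ▸ hanti (Ioo_subset_Icc_self hx) (right_mem_Icc.2 hpq.le) hx.2

theorem deriv_eq_zero_of_isMinOn_Icc (ha : deriv u a = 0) (hb : deriv u b = 0)
    (hz₀ : z₀ ∈ Icc a b) (hmin : IsMinOn u (Icc a b) z₀) : deriv u z₀ = 0 := by
  rcases eq_endpoints_or_mem_Ioo_of_mem_Icc hz₀ with rfl | rfl | h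
  · exact ha
  · exact hb
  · exact (hmin.isLocalMin (Icc_mem_nhds h.1 h.2)).deriv_eq_zero

theorem frequently_deriv_deriv_nonneg_of_isMinOn_Icc (hab : a < b)
    (hu : ContinuousOn u (Icc a b)) (hu' : ContinuousOn (deriv u) (Icc a b))
    (ha : deriv u a = 0) (hb : deriv u b = 0) (hz₀ : z₀ ∈ Icc a b)
    (hmin : IsMinOn u (Icc a b) z₀) :
    ∃ᶠ x in 𝓝[Ioo a b] z₀, 0 ≤ deriv (deriv u) x := by
  intro hneg
  obtain ⟨ε, hε, hball⟩ := Metric.mem_nhdsWithin_iff.1 hneg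
  have hconcave : ∀ x ∈ Ioo a b, |x - z₀| < ε → deriv (deriv u) x < 0 := fun x hx hxε =>
    not_le.1 (hball ⟨by rwa [Metric.mem_ball, Real.dist_eq], hx⟩)
  rcases hz₀.2.lt_or_eq with hlt | rfl
  · set q := min (z₀ + ε / 2) b
    have hq : z₀ < q := lt_min (by linarith) hlt
    have hsub : Icc z₀ q ⊆ Icc a b := Icc_subset_Icc hz₀.1 (min_le_right _ _)
    refine (hmin (hsub (right_mem_Icc.2 hq.le))).not_gt
      (lt_of_deriv_deriv_neg_of_deriv_left_eq_zero hq (hu.mono hsub) (hu'.mono hsub)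
        (fun x hx => hconcave x ⟨hz₀.1.trans_lt hx.1, hx.2.trans_le (min_le_right _ _)⟩ ?_)
        (deriv_eq_zero_of_isMinOn_Icc ha hb hz₀ hmin))
    rw [abs_of_pos (sub_pos.2 hx.1)]
    linarith [hx.2.trans_le (min_le_left _ _)]
  · set p := max (z₀ - ε / 2) a
    have hp : p < z₀ := max_lt (by linarith) hab
    have hsub : Icc p z₀ ⊆ Icc a z₀ := Icc_subset_Icc (le_max_right _ _) le_rfl
    refine (hmin (hsub (left_mem_Icc.2 hp.le))).not_gt
      (lt_of_deriv_deriv_neg_of_deriv_right_eq_zero hp (hu.mono hsub) (hu'.mono hsub)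
        (fun x hx => hconcave x ⟨(le_max_right _ _).trans_lt hx.1, hx.2⟩ ?_) hb)
    rw [abs_of_neg (sub_neg.2 hx.2)]
    linarith [(le_max_left _ _).trans_lt hx.1]

theorem le_mul_of_neumann_supersolution {d ρ : ℝ} {G : ℝ → ℝ} (hab : a < b) (hd : 0 ≤ d)
    (hρ : 0 ≤ ρ) (hG : ContinuousAt G 0) (hu : ContinuousOn u (Icc a b))
    (hu' : ContinuousOn (deriv u) (Icc a b)) (ha : deriv u a = 0) (hb : deriv u b = 0)
    (hsuper : ∀ x ∈ Ioo a b, d * deriv (deriv u) x + G (deriv u x) ≤ ρ * u x) :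
    ∀ z ∈ Icc a b, G 0 ≤ ρ * u z := by
  intro z hz
  obtain ⟨z₀, hz₀, hmin⟩ :=
    isCompact_Icc.exists_isMinOn (nonempty_Icc.2 hab.le) hu
  suffices G 0 ≤ ρ * u z₀ from this.trans (mul_le_mul_of_nonneg_left (hmin hz) hρ)
  by_contra! hlt
  have hlim : Tendsto (fun x => G (deriv u x) - ρ * u x) (𝓝[Ioo a b] z₀)
      (𝓝 (G 0 - ρ * u z₀)) := by
    have hdu := (hu' z₀ hz₀).mono Ioo_subset_Icc_self
    rw [ContinuousWithinAt, deriv_eq_zero_of_isMinOn_Icc ha hb hz₀ hmin] at hdu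
    exact (hG.tendsto.comp hdu).sub
      (((hu z₀ hz₀).mono Ioo_subset_Icc_self).tendsto.const_mul ρ)
  have hgap : ∀ᶠ x in 𝓝[Ioo a b] z₀, ρ * u x < G (deriv u x) :=
    (hlim.eventually (lt_mem_nhds (sub_pos.2 hlt))).mono fun x hx => sub_pos.1 hx
  obtain ⟨x, hx, hxgap, hxI⟩ :=
    ((frequently_deriv_deriv_nonneg_of_isMinOn_Icc hab hu hu' ha hb hz₀
      hmin).and_eventually (hgap.and self_mem_nhdsWithin)).exists
  linarith [hsuper x hxI, mul_nonneg hd hx]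

end MinimumPrinciple

theorem stmt_0_general (zb σ ρ w B k α γ : ℝ)
(hz : 0 < zb) (hρ : 0 < ρ) (hB : 0 < B)
    (hα : α ∈ Set.Ioo (0:ℝ) 1) (hγ : γ ∈ Set.Ioo (0:ℝ) 1)
    (V : ℝ → ℝ)
    (hV : DifferentiableOn ℝ V (Set.Icc 0 zb))
    (hV' : ContinuousOn (deriv V) (Set.Icc 0 zb))
    (heq : ∀ z ∈ Set.Ioo 0 zb,
      -(σ^2/2) * deriv (deriv V) z + ρ * V z -
        ((1-γ) * (γ/w) ^ (γ/(1-γ)) * (max 0 (deriv V z)) ^ (1/(1-γ))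
          + k * deriv V z + z ^ α / B ^ (α-1)) = 0)
    (hbc0 : deriv V 0 = 0) (hbc1 : deriv V zb = 0) :
    ∀ z ∈ Set.Icc 0 zb, 0 ≤ V z ∧ V z ≤ zb ^ α / (ρ * B ^ (α-1)) := by
  set c := (1-γ) * (γ/w) ^ (γ/(1-γ))
  set q := 1/(1-γ)
  set T := zb ^ α / B ^ (α-1)
  have hq : 0 < q := one_div_pos.2 (sub_pos.2 hγ.2)
  have hBα : 0 < B ^ (α-1) := Real.rpow_pos_of_pos hB _
  have hsource : ∀ x ∈ Ioo 0 zb, 0 ≤ x ^ α / B ^ (α-1) ∧ x ^ α / B ^ (α-1) ≤ T :=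
    fun x hx => ⟨div_nonneg (Real.rpow_nonneg hx.1.le _) hBα.le,
      div_le_div_of_nonneg_right (Real.rpow_le_rpow hx.1.le hx.2.le hα.1.le) hBα.le⟩
  have lower := le_mul_of_neumann_supersolution (d := σ^2/2)
    (G := fun p => c * max 0 p ^ q + k * p)
    hz (by positivity) hρ.le (by fun_prop (disch := exact Or.inr hq.le)) hV.continuousOn hV'
    hbc0 hbc1
    (fun x hx => by linarith [heq x hx, (hsource x hx).1])
  have upper := le_mul_of_neumann_supersolution (u := fun x => -V x) (d := σ^2/2)
    (G := fun p => -(c * max 0 (-p) ^ q) + k * p - T)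
    hz (by positivity) hρ.le (by fun_prop (disch := exact Or.inr hq.le)) hV.continuousOn.neg
    (by rw [deriv.fun_neg']; exact hV'.neg) (by simp [hbc0]) (by simp [hbc1])
    (fun x hx => by simp only [deriv.fun_neg', neg_neg]; linarith [heq x hx, (hsource x hx).2])
  intro z hzI
  simp only [max_self, Real.zero_rpow hq.ne', mul_zero, zero_add, neg_zero, zero_sub,
    mul_neg, neg_le_neg_iff] at lower upper
  refine ⟨nonneg_of_mul_nonneg_right (lower z hzI) hρ, ?_⟩
  rw [div_mul_eq_div_div_swap, le_div_iff₀ hρ, mul_comm]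
  exact upper z hzI

/-- A classical solution of the auxiliary HJB equation with Neumann
boundary conditions satisfies 0 ≤ V ≤ z̄^α/(ρ B^(α-1)) on [0, z̄]. -/
theorem stmt_0 (zb σ ρ w B k α γ : ℝ)
(hz : 0 < zb) (hσ : 0 < σ) (hρ : 0 < ρ) (hw : 0 < w) (hB : 0 < B)
    (hk : 0 ≤ k) (hα : α ∈ Set.Ioo (0:ℝ) 1) (hγ : γ ∈ Set.Ioo (0:ℝ) 1)
    (V : ℝ → ℝ)
    (hV : DifferentiableOn ℝ V (Set.Icc 0 zb))
    (hV' : ContinuousOn (deriv V) (Set.Icc 0 zb))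
    (hV'' : ∀ z ∈ Set.Ioo 0 zb, DifferentiableAt ℝ (deriv V) z)
    (hV''c : ContinuousOn (deriv (deriv V)) (Set.Ioo 0 zb))
    (heq : ∀ z ∈ Set.Ioo 0 zb,
      -(σ^2/2) * deriv (deriv V) z + ρ * V z -
        ((1-γ) * (γ/w) ^ (γ/(1-γ)) * (max 0 (deriv V z)) ^ (1/(1-γ))
          + k * deriv V z + z ^ α / B ^ (α-1)) = 0)
    (hbc0 : deriv V 0 = 0) (hbc1 : deriv V zb = 0) :
    ∀ z ∈ Set.Icc 0 zb, 0 ≤ V z ∧ V z ≤ zb ^ α / (ρ * B ^ (α-1)) :=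
  stmt_0_general zb σ ρ w B k α γ hz hρ hB hα hγ V hV hV' heq hbc0 hbc1
end

section
/- Let V ∈ C²((0, z̄)) ∩ C¹([0, z̄]) solve -（σ²/2）V'' + ρV - (1-γ)(γ/w)^{γ/(1-γ)} max(0,V')^{1/(1-γ)} - kV' - z^α/B^{α-1} = 0 on (0, z̄) with V'(0) = V'(z̄) = 0, where σ, ρ, w, B > 0, k ≥ 0, α, γ ∈ (0,1). Then V' ≥ 0 on [0, z̄], i.e., V is nondecreasing. -/
/-- A classical solution of the auxiliary HJB equation with Neumann
boundary conditions is nondecreasing: V' ≥ 0 on [0, z̄]. -/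
theorem stmt_1 (zb σ ρ w B k α γ : ℝ)
(hz : 0 < zb) (hσ : 0 < σ) (hρ : 0 < ρ) (hw : 0 < w) (hB : 0 < B)
    (hk : 0 ≤ k) (hα : α ∈ Set.Ioo (0:ℝ) 1) (hγ : γ ∈ Set.Ioo (0:ℝ) 1)
    (V : ℝ → ℝ)
    (hV : DifferentiableOn ℝ V (Set.Icc 0 zb))
    (hV' : ContinuousOn (deriv V) (Set.Icc 0 zb))
    (hV'' : ∀ z ∈ Set.Ioo 0 zb, DifferentiableAt ℝ (deriv V) z)
    (hV''c : ContinuousOn (deriv (deriv V)) (Set.Ioo 0 zb))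
    (heq : ∀ z ∈ Set.Ioo 0 zb,
      -(σ^2/2) * deriv (deriv V) z + ρ * V z -
        ((1-γ) * (γ/w) ^ (γ/(1-γ)) * (max 0 (deriv V z)) ^ (1/(1-γ))
          + k * deriv V z + z ^ α / B ^ (α-1)) = 0)
    (hbc0 : deriv V 0 = 0) (hbc1 : deriv V zb = 0) :
    ∀ z ∈ Set.Icc 0 zb, 0 ≤ deriv V z := by
  by_contra hcon
  push_neg at hcon
  obtain ⟨c, hc, hVc⟩ := hcon
  have hγ1 : (0:ℝ) < 1 - γ := by linarith [hγ.2]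
  -- c is interior
  have hc0 : c ≠ 0 := by rintro rfl; rw [hbc0] at hVc; linarith
  have hczb : c ≠ zb := by rintro rfl; rw [hbc1] at hVc; linarith
  have hcI : c ∈ Set.Ioo 0 zb := ⟨lt_of_le_of_ne hc.1 (Ne.symm hc0), lt_of_le_of_ne hc.2 hczb⟩
  -- the set of zeros of V' to the left of c
  set Sa : Set ℝ := Set.Icc 0 c ∩ deriv V ⁻¹' {0} with hSadef
  have hSacl : IsClosed Sa :=
    (hV'.mono (Set.Icc_subset_Icc le_rfl hc.2)).preimage_isClosed_of_isClosed
      isClosed_Icc isClosed_singleton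
  have hSane : Sa.Nonempty := ⟨0, ⟨le_rfl, hcI.1.le⟩, hbc0⟩
  have hSabdd : BddAbove Sa := ⟨c, fun x hx => hx.1.2⟩
  set a := sSup Sa with hadef
  have haS : a ∈ Sa := hSacl.csSup_mem hSane hSabdd
  have ha0 : 0 ≤ a := haS.1.1
  have hac : a ≤ c := haS.1.2
  have hVa' : deriv V a = 0 := haS.2
  have halt : a < c := lt_of_le_of_ne hac (by intro h; rw [h] at hVa'; rw [hVa'] at hVc; linarith)
  -- V' < 0 on (a, c]
  have hneg_ac : ∀ z ∈ Set.Ioc a c, deriv V z < 0 := by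
    rintro z ⟨haz, hzc⟩
    by_contra h
    push_neg at h
    rcases h.lt_or_eq with h | h
    · -- V' z > 0 : IVT gives a zero in [z, c]
      obtain ⟨y, hy, hy0⟩ := intermediate_value_Icc' hzc
        (hV'.mono (Set.Icc_subset_Icc (le_trans ha0 haz.le) hcI.2.le))
        (Set.mem_Icc.mpr ⟨hVc.le, h.le⟩)
      have : y ∈ Sa := ⟨⟨le_trans (le_trans ha0 haz.le) hy.1, hy.2⟩, hy0⟩
      have := le_csSup hSabdd this
      have : a < y := lt_of_lt_of_le haz hy.1
      linarith
    · have : z ∈ Sa := ⟨⟨le_trans ha0 haz.le, hzc⟩, h.symm⟩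
      have := le_csSup hSabdd this
      linarith
  -- the set of zeros of V' to the right of c
  set Sb : Set ℝ := Set.Icc c zb ∩ deriv V ⁻¹' {0} with hSbdef
  have hSbcl : IsClosed Sb :=
    (hV'.mono (Set.Icc_subset_Icc hc.1 le_rfl)).preimage_isClosed_of_isClosed
      isClosed_Icc isClosed_singleton
  have hSbne : Sb.Nonempty := ⟨zb, ⟨hcI.2.le, le_rfl⟩, hbc1⟩
  have hSbbdd : BddBelow Sb := ⟨c, fun x hx => hx.1.1⟩
  set b := sInf Sb with hbdef
  have hbS : b ∈ Sb := hSbcl.csInf_mem hSbne hSbbdd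
  have hcb : c ≤ b := hbS.1.1
  have hbzb : b ≤ zb := hbS.1.2
  have hVb' : deriv V b = 0 := hbS.2
  have hbgt : c < b := lt_of_le_of_ne hcb (by intro h; rw [← h] at hVb'; rw [hVb'] at hVc; linarith)
  have hneg_cb : ∀ z ∈ Set.Ico c b, deriv V z < 0 := by
    rintro z ⟨hcz, hzb⟩
    by_contra h
    push_neg at h
    rcases h.lt_or_eq with h | h
    · obtain ⟨y, hy, hy0⟩ := intermediate_value_Icc hcz
        (hV'.mono (Set.Icc_subset_Icc hcI.1.le (le_trans hzb.le hbzb)))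
        (Set.mem_Icc.mpr ⟨hVc.le, h.le⟩)
      have : y ∈ Sb := ⟨⟨hy.1, le_trans (le_trans hy.2 hzb.le) hbzb⟩, hy0⟩
      have := csInf_le hSbbdd this
      have : y < b := lt_of_le_of_lt hy.2 hzb
      linarith
    · have : z ∈ Sb := ⟨⟨hcz, le_trans hzb.le hbzb⟩, h.symm⟩
      have := csInf_le hSbbdd this
      linarith
  have hab : a < b := lt_trans halt hbgt
  -- V' < 0 on (a, b)
  have hneg : ∀ z ∈ Set.Ioo a b, deriv V z < 0 := by
    rintro z ⟨haz, hzb⟩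
    rcases le_or_gt z c with h | h
    · exact hneg_ac z ⟨haz, h⟩
    · exact hneg_cb z ⟨h.le, hzb⟩
  -- V is strictly decreasing on [a, b]
  have hanti : StrictAntiOn V (Set.Icc a b) := by
    apply strictAntiOn_of_deriv_neg (convex_Icc a b)
      (hV.continuousOn.mono (Set.Icc_subset_Icc ha0 hbzb))
    intro x hx
    rw [interior_Icc] at hx
    exact hneg x hx
  have hVab : V b < V a := hanti (Set.left_mem_Icc.mpr hab.le) (Set.right_mem_Icc.mpr hab.le) hab
  -- the reduced equation where V' < 0
  set g : ℝ → ℝ := fun z => ρ * V z - k * deriv V z - z ^ α / B ^ (α - 1) with hgdef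
  have hkey : ∀ z ∈ Set.Ioo 0 zb, deriv V z < 0 → σ ^ 2 / 2 * deriv (deriv V) z = g z := by
    intro z hz hzneg
    have h0 := heq z hz
    have hmax : max 0 (deriv V z) = 0 := max_eq_left hzneg.le
    have hrp : (0:ℝ) ^ (1 / (1 - γ)) = 0 := Real.zero_rpow (by positivity)
    rw [hmax, hrp] at h0
    simp only [hgdef]
    ring_nf at h0 ⊢
    linarith
  -- continuity of g
  have hgcont : ContinuousOn g (Set.Icc 0 zb) := by
    apply ContinuousOn.sub (ContinuousOn.sub (continuousOn_const.mul hV.continuousOn)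
      (continuousOn_const.mul hV'))
    exact (continuousOn_id.rpow_const (fun x _ => Or.inr hα.1.le)).div_const _
  -- Ioo a b inside Ioo 0 zb
  have hIoosub : Set.Ioo a b ⊆ Set.Ioo 0 zb :=
    fun x hx => ⟨lt_of_le_of_lt ha0 hx.1, lt_of_lt_of_le hx.2 hbzb⟩
  -- g b ≥ 0
  have hgb : 0 ≤ g b := by
    by_contra hgb
    push_neg at hgb
    have hbmem : b ∈ Set.Icc 0 zb := ⟨le_trans ha0 hab.le, hbzb⟩
    have hgc := hgcont b hbmem
    rw [Metric.continuousWithinAt_iff] at hgc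
    obtain ⟨δ, hδ, hδ'⟩ := hgc (-g b) (by linarith)
    set z := max a (b - δ / 2) with hzdef
    have hzb' : z < b := max_lt hab (by linarith)
    have haz : a ≤ z := le_max_left _ _
    obtain ⟨ξ, hξ, hξeq⟩ := exists_deriv_eq_slope (deriv V) hzb'
      (hV'.mono (Set.Icc_subset_Icc (le_trans ha0 haz) hbzb))
      (fun x hx => (hV'' x (hIoosub ⟨lt_of_le_of_lt haz hx.1, hx.2⟩)).differentiableWithinAt)
    have hξab : ξ ∈ Set.Ioo a b := ⟨lt_of_le_of_lt haz hξ.1, hξ.2⟩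
    have hξI : ξ ∈ Set.Ioo 0 zb := hIoosub hξab
    have hVz : deriv V z ≤ 0 := by
      rcases eq_or_lt_of_le haz with h | h
      · rw [← h, hVa']
      · exact (hneg z ⟨h, hzb'⟩).le
    have hslope : 0 ≤ deriv (deriv V) ξ := by
      rw [hξeq, hVb']
      apply div_nonneg (by linarith) (by linarith [hξ.1, hξ.2])
    have hgξ : 0 ≤ g ξ := by
      rw [← hkey ξ hξI (hneg ξ hξab)]
      positivity
    have hξmem : ξ ∈ Set.Icc 0 zb := ⟨hξI.1.le, hξI.2.le⟩
    have hdist : dist ξ b < δ := by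
      rw [Real.dist_eq, abs_of_nonpos (by linarith [hξ.2])]
      have : b - δ / 2 ≤ z := le_max_right _ _
      linarith [hξ.1]
    have := hδ' hξmem hdist
    rw [Real.dist_eq] at this
    have := (abs_lt.mp this).2
    linarith
  -- g a ≤ 0
  have hga : g a ≤ 0 := by
    by_contra hga
    push_neg at hga
    have hamem : a ∈ Set.Icc 0 zb := ⟨ha0, le_trans hab.le hbzb⟩
    have hgc := hgcont a hamem
    rw [Metric.continuousWithinAt_iff] at hgc
    obtain ⟨δ, hδ, hδ'⟩ := hgc (g a) (by linarith)
    set z := min b (a + δ / 2) with hzdef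
    have haz : a < z := lt_min hab (by linarith)
    have hzb' : z ≤ b := min_le_left _ _
    obtain ⟨ξ, hξ, hξeq⟩ := exists_deriv_eq_slope (deriv V) haz
      (hV'.mono (Set.Icc_subset_Icc ha0 (le_trans hzb' hbzb)))
      (fun x hx => (hV'' x (hIoosub ⟨hx.1, lt_of_lt_of_le hx.2 hzb'⟩)).differentiableWithinAt)
    have hξab : ξ ∈ Set.Ioo a b := ⟨hξ.1, lt_of_lt_of_le hξ.2 hzb'⟩
    have hξI : ξ ∈ Set.Ioo 0 zb := hIoosub hξab
    have hVz : deriv V z ≤ 0 := by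
      rcases eq_or_lt_of_le hzb' with h | h
      · rw [h, hVb']
      · exact (hneg z ⟨haz, h⟩).le
    have hslope : deriv (deriv V) ξ ≤ 0 := by
      rw [hξeq, hVa']
      apply div_nonpos_of_nonpos_of_nonneg (by linarith) (by linarith [hξ.1, hξ.2])
    have hgξ : g ξ ≤ 0 := by
      rw [← hkey ξ hξI (hneg ξ hξab)]
      have hσ2 : (0:ℝ) < σ ^ 2 / 2 := by positivity
      exact mul_nonpos_of_nonneg_of_nonpos hσ2.le hslope
    have hξmem : ξ ∈ Set.Icc 0 zb := ⟨hξI.1.le, hξI.2.le⟩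
    have hdist : dist ξ a < δ := by
      rw [Real.dist_eq, abs_of_nonneg (by linarith [hξ.1])]
      have : z ≤ a + δ / 2 := min_le_right _ _
      linarith [hξ.2]
    have := hδ' hξmem hdist
    rw [Real.dist_eq] at this
    have := (abs_lt.mp this).1
    linarith
  -- final contradiction
  have hBpos : (0:ℝ) < B ^ (α - 1) := Real.rpow_pos_of_pos hB _
  have hpow : a ^ α ≤ b ^ α := Real.rpow_le_rpow ha0 hab.le hα.1.le
  have hdivle : a ^ α / B ^ (α - 1) ≤ b ^ α / B ^ (α - 1) :=
    div_le_div_of_nonneg_right hpow hBpos.le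
  have hga' : ρ * V a ≤ a ^ α / B ^ (α - 1) := by
    have := hga
    simp only [hgdef, hVa'] at this
    linarith
  have hgb' : b ^ α / B ^ (α - 1) ≤ ρ * V b := by
    have := hgb
    simp only [hgdef, hVb'] at this
    linarith
  have : ρ * V b < ρ * V a := mul_lt_mul_of_pos_left hVab hρ
  linarith
end

section
/- Let V ∈ C²((0, z̄)) ∩ C¹([0, z̄]) solve -（σ²/2）V'' + ρV - (1-γ)(γ/w)^{γ/(1-γ)} max(0,V')^{1/(1-γ)} - kV' - z^α/B^{α-1} = 0 with Neumann boundary conditions, and suppose V' ≥ 0 on [0, z̄]. Then V'(z) > 0 for all z ∈ (0, z̄). -/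
/-- If moreover V' ≥ 0 on [0, z̄], then V' > 0 in the interior. -/
theorem stmt_2 (zb σ ρ w B k α γ : ℝ)
(hz : 0 < zb) (hσ : 0 < σ) (hρ : 0 < ρ) (hw : 0 < w) (hB : 0 < B)
    (hk : 0 ≤ k) (hα : α ∈ Set.Ioo (0:ℝ) 1) (hγ : γ ∈ Set.Ioo (0:ℝ) 1)
    (V : ℝ → ℝ)
    (hV : DifferentiableOn ℝ V (Set.Icc 0 zb))
    (hV' : ContinuousOn (deriv V) (Set.Icc 0 zb))
    (hV'' : ∀ z ∈ Set.Ioo 0 zb, DifferentiableAt ℝ (deriv V) z)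
    (hV''c : ContinuousOn (deriv (deriv V)) (Set.Ioo 0 zb))
    (heq : ∀ z ∈ Set.Ioo 0 zb,
      -(σ^2/2) * deriv (deriv V) z + ρ * V z -
        ((1-γ) * (γ/w) ^ (γ/(1-γ)) * (max 0 (deriv V z)) ^ (1/(1-γ))
          + k * deriv V z + z ^ α / B ^ (α-1)) = 0)
    (hbc0 : deriv V 0 = 0) (hbc1 : deriv V zb = 0)
    (hmono : ∀ z ∈ Set.Icc 0 zb, 0 ≤ deriv V z) :
    ∀ z ∈ Set.Ioo 0 zb, 0 < deriv V z := by
  intro z₀ hz₀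
  by_contra hle
  push_neg at hle
  have hz0m : deriv V z₀ = 0 :=
    le_antisymm hle (hmono z₀ ⟨hz₀.1.le, hz₀.2.le⟩)
  have hγ1 : (0:ℝ) < 1 - γ := by linarith [hγ.2]
  have hnhds : Set.Icc 0 zb ∈ nhds z₀ := Icc_mem_nhds hz₀.1 hz₀.2
  -- V''(z₀) = 0 since z₀ is an interior minimum of V'
  have hmin : IsLocalMin (deriv V) z₀ := by
    filter_upwards [hnhds] with x hx
    rw [hz0m]; exact hmono x hx
  have hV''z0 : deriv (deriv V) z₀ = 0 := hmin.deriv_eq_zero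
  -- Evaluating the equation at z₀
  have hVz0 : ρ * V z₀ = z₀ ^ α / B ^ (α - 1) := by
    have h := heq z₀ hz₀
    rw [hz0m, hV''z0] at h
    have h0 : (max (0:ℝ) 0 : ℝ) ^ (1/(1-γ)) = 0 := by
      rw [max_self]
      exact Real.zero_rpow (by positivity)
    rw [h0] at h
    linarith [h]
  set c1 := B ^ (α - 1) with hc1
  have hc1pos : 0 < c1 := Real.rpow_pos_of_pos hB _
  set m := α * zb ^ (α - 1) with hm
  have hmpos : 0 < m := mul_pos hα.1 (Real.rpow_pos_of_pos hz _)
  set ε := m / c1 / (2 * ρ) with hε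
  have hεpos : 0 < ε := by rw [hε]; exact div_pos (div_pos hmpos hc1pos) (by linarith)
  -- continuity: deriv V < ε near z₀
  have hcontat : ContinuousAt (deriv V) z₀ := hV'.continuousAt hnhds
  have hev : ∀ᶠ x in nhds z₀, deriv V x < ε :=
    hcontat.eventually_lt continuousAt_const (by rw [hz0m]; exact hεpos)
  obtain ⟨δ, hδpos, hδ⟩ := Metric.eventually_nhds_iff.mp hev
  set η := min (δ/2) ((zb - z₀)/2) with hηdef
  have hηpos : 0 < η := lt_min (by linarith) (by linarith [hz₀.2])
  have hηδ : η < δ := lt_of_le_of_lt (min_le_left _ _) (by linarith)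
  have hηzb : z₀ + η < zb := by
    have : η ≤ (zb - z₀)/2 := min_le_right _ _
    linarith [hz₀.2]
  have hIsub : Set.Icc z₀ (z₀+η) ⊆ Set.Ioo 0 zb := fun x hx =>
    ⟨lt_of_lt_of_le hz₀.1 hx.1, lt_of_le_of_lt hx.2 hηzb⟩
  have hIsub' : Set.Icc z₀ (z₀+η) ⊆ Set.Icc 0 zb := fun x hx =>
    ⟨le_of_lt (hIsub hx).1, le_of_lt (hIsub hx).2⟩
  have hVlt : ∀ x ∈ Set.Icc z₀ (z₀+η), deriv V x < ε := by
    intro x hx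
    apply hδ
    rw [Real.dist_eq, abs_of_nonneg (by linarith [hx.1])]
    calc x - z₀ ≤ η := by linarith [hx.2]
    _ < δ := hηδ
  have hdiffV : ∀ x ∈ Set.Icc z₀ (z₀+η), DifferentiableAt ℝ V x := fun x hx =>
    hV.differentiableAt (Icc_mem_nhds (hIsub hx).1 (hIsub hx).2)
  -- φ = ε x - V x is monotone on I := [z₀, z₀+η]
  have hφ : MonotoneOn (fun x => ε * x - V x) (Set.Icc z₀ (z₀+η)) := by
    apply monotoneOn_of_deriv_nonneg (convex_Icc _ _)
    · exact (continuousOn_const.mul continuousOn_id).sub (hV.continuousOn.mono hIsub')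
    · intro x hx
      rw [interior_Icc] at hx
      exact (((hasDerivAt_id x).const_mul ε).sub
        (hdiffV x ⟨hx.1.le, hx.2.le⟩).hasDerivAt).differentiableAt.differentiableWithinAt
    · intro x hx
      rw [interior_Icc] at hx
      have hd : HasDerivAt (fun x => ε * x - V x) (ε * 1 - deriv V x) x :=
        ((hasDerivAt_id x).const_mul ε).sub (hdiffV x ⟨hx.1.le, hx.2.le⟩).hasDerivAt
      rw [hd.deriv]
      have := hVlt x ⟨hx.1.le, hx.2.le⟩
      linarith
  -- ψ = x^α - m x is monotone on I
  have hψ : MonotoneOn (fun x : ℝ => x ^ α - m * x) (Set.Icc z₀ (z₀+η)) := by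
    have hd : ∀ x ∈ Set.Icc z₀ (z₀+η),
        HasDerivAt (fun x : ℝ => x ^ α - m * x) (α * x ^ (α-1) - m * 1) x := by
      intro x hx
      exact (Real.hasDerivAt_rpow_const (Or.inl (ne_of_gt (hIsub hx).1))).sub
        ((hasDerivAt_id x).const_mul m)
    apply monotoneOn_of_deriv_nonneg (convex_Icc _ _)
    · exact fun x hx => (hd x hx).continuousAt.continuousWithinAt
    · intro x hx
      rw [interior_Icc] at hx
      exact (hd x ⟨hx.1.le, hx.2.le⟩).differentiableAt.differentiableWithinAt
    · intro x hx
      rw [interior_Icc] at hx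
      have hx' : x ∈ Set.Icc z₀ (z₀+η) := ⟨hx.1.le, hx.2.le⟩
      rw [(hd x hx').deriv]
      have hxpos : 0 < x := (hIsub hx').1
      have hxzb : x ≤ zb := ((hIsub hx').2).le
      have hrb : zb ^ (α-1) ≤ x ^ (α-1) :=
        Real.rpow_le_rpow_of_nonpos hxpos hxzb (by linarith [hα.2])
      have : m ≤ α * x ^ (α-1) := by
        rw [hm]
        exact mul_le_mul_of_nonneg_left hrb hα.1.le
      linarith
  -- V'' < 0 on the interior of I
  have hρε : ρ * ε = m / (2 * c1) := by
    rw [hε]; field_simp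
  have hV''neg : ∀ x ∈ Set.Ioo z₀ (z₀+η), deriv (deriv V) x < 0 := by
    intro x hx
    have hx' : x ∈ Set.Icc z₀ (z₀+η) := ⟨hx.1.le, hx.2.le⟩
    have hxI : x ∈ Set.Ioo 0 zb := hIsub hx'
    have h := heq x hxI
    have hA : 0 ≤ (1-γ) * (γ/w) ^ (γ/(1-γ)) * (max 0 (deriv V x)) ^ (1/(1-γ)) := by
      have h1 : (0:ℝ) ≤ (γ/w) ^ (γ/(1-γ)) := Real.rpow_nonneg (div_nonneg hγ.1.le hw.le) _
      have h2 : (0:ℝ) ≤ (max 0 (deriv V x)) ^ (1/(1-γ)) :=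
        Real.rpow_nonneg (le_max_left _ _) _
      exact mul_nonneg (mul_nonneg hγ1.le h1) h2
    have hk' : 0 ≤ k * deriv V x := mul_nonneg hk (hmono x ⟨hxI.1.le, hxI.2.le⟩)
    have hz₀I : z₀ ∈ Set.Icc z₀ (z₀+η) := Set.left_mem_Icc.mpr (by linarith)
    have hVb : V x - V z₀ ≤ ε * (x - z₀) := by
      have h2 := hφ hz₀I hx' hx.1.le
      simp only at h2
      linarith
    have hxa : m * (x - z₀) ≤ x ^ α - z₀ ^ α := by
      have h2 := hψ hz₀I hx' hx.1.le
      simp only at h2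
      linarith
    have hdiv : (m * (x - z₀)) / c1 ≤ (x ^ α - z₀ ^ α) / c1 :=
      div_le_div_of_nonneg_right hxa hc1pos.le
    have hc : ρ * (V x - V z₀) ≤ ρ * (ε * (x - z₀)) :=
      mul_le_mul_of_nonneg_left hVb hρ.le
    have heq2 : ρ * (ε * (x - z₀)) = (m / (2 * c1)) * (x - z₀) := by
      rw [← mul_assoc, hρε]
    have hsplit : x ^ α / c1 = z₀ ^ α / c1 + (x ^ α - z₀ ^ α) / c1 := by ring
    have hneg : (m / (2 * c1)) * (x - z₀) - (m * (x - z₀)) / c1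
        = -((m * (x - z₀)) / (2 * c1)) := by ring
    have hxz : 0 < x - z₀ := by linarith [hx.1]
    have hpos2 : 0 < (m * (x - z₀)) / (2 * c1) := div_pos (mul_pos hmpos hxz) (by linarith)
    have hσ2 : 0 < σ^2/2 := by positivity
    have hkey : (σ^2/2) * deriv (deriv V) x ≤ -((m * (x - z₀)) / (2 * c1)) := by
      linarith [h, hA, hk', hc, heq2, hsplit, hdiv, hVz0, hneg]
    by_contra hW
    push_neg at hW
    have := mul_nonneg hσ2.le hW
    linarith
  -- V' strictly decreasing on I, contradiction
  have hanti : StrictAntiOn (deriv V) (Set.Icc z₀ (z₀+η)) :=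
    strictAntiOn_of_deriv_neg (convex_Icc _ _) (hV'.mono hIsub')
      (by rw [interior_Icc]; exact hV''neg)
  have hcontr := hanti (Set.left_mem_Icc.mpr (by linarith))
    (Set.right_mem_Icc.mpr (by linarith)) (by linarith)
  have hge := hmono (z₀+η) ⟨by linarith [hz₀.1], hηzb.le⟩
  rw [hz0m] at hcontr
  linarith
end

section
/- Let V ∈ C²((0, z̄)) ∩ C¹([0, z̄]) solve the auxiliary HJB equation -（σ²/2）V'' + ρV - (1-γ)(γ/w)^{γ/(1-γ)} max(0,V')^{1/(1-γ)} - kV' - z^α/B^{α-1} = 0 with Neumann boundary conditions, and suppose 0 ≤ V ≤ z̄^α/(ρ B^{α-1}) and V' ≥ 0. Then sup_{z ∈ [0,z̄]} V'(z) ≤ [z̄^α / ((1-γ) B^{α-1})]^{1-γ} (w/γ)^γ. -/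
/-- gradient bound for the auxiliary HJB solution. -/
theorem stmt_3 (zb σ ρ w B k α γ : ℝ)
(hz : 0 < zb) (hσ : 0 < σ) (hρ : 0 < ρ) (hw : 0 < w) (hB : 0 < B)
    (hk : 0 ≤ k) (hα : α ∈ Set.Ioo (0:ℝ) 1) (hγ : γ ∈ Set.Ioo (0:ℝ) 1)
    (V : ℝ → ℝ)
    (hV : DifferentiableOn ℝ V (Set.Icc 0 zb))
    (hV' : ContinuousOn (deriv V) (Set.Icc 0 zb))
    (hV'' : ∀ z ∈ Set.Ioo 0 zb, DifferentiableAt ℝ (deriv V) z)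
    (hV''c : ContinuousOn (deriv (deriv V)) (Set.Ioo 0 zb))
    (heq : ∀ z ∈ Set.Ioo 0 zb,
      -(σ^2/2) * deriv (deriv V) z + ρ * V z -
        ((1-γ) * (γ/w) ^ (γ/(1-γ)) * (max 0 (deriv V z)) ^ (1/(1-γ))
          + k * deriv V z + z ^ α / B ^ (α-1)) = 0)
    (hbc0 : deriv V 0 = 0) (hbc1 : deriv V zb = 0)
    (hbound : ∀ z ∈ Set.Icc 0 zb, 0 ≤ V z ∧ V z ≤ zb ^ α / (ρ * B ^ (α-1)))
    (hmono : ∀ z ∈ Set.Icc 0 zb, 0 ≤ deriv V z) :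
    ∀ z ∈ Set.Icc 0 zb,
      deriv V z ≤ (zb ^ α / ((1-γ) * B ^ (α-1))) ^ (1-γ) * (w/γ) ^ γ := by
  obtain ⟨hα0, hα1⟩ := hα
  obtain ⟨hγ0, hγ1⟩ := hγ
  have h1γ : (0:ℝ) < 1 - γ := by linarith
  set C : ℝ := (γ/w) ^ (γ/(1-γ)) with hC
  have hCpos : 0 < C := Real.rpow_pos_of_pos (by positivity) _
  set A : ℝ := zb ^ α / B ^ (α-1) with hA
  have hApos : 0 < A := by positivity
  set RHS : ℝ := (zb ^ α / ((1-γ) * B ^ (α-1))) ^ (1-γ) * (w/γ) ^ γ with hRHS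
  have hRHS0 : 0 ≤ RHS := by positivity
  obtain ⟨z0, hz0, hmax⟩ :=
    isCompact_Icc.exists_isMaxOn (Set.nonempty_Icc.mpr hz.le) hV'
  have key : deriv V z0 ≤ RHS := by
    rcases eq_or_lt_of_le hz0.1 with h0 | h0
    · rw [← h0, hbc0]; exact hRHS0
    rcases eq_or_lt_of_le hz0.2 with h1 | h1
    · rw [h1, hbc1]; exact hRHS0
    have hzI : z0 ∈ Set.Ioo 0 zb := ⟨h0, h1⟩
    have hloc : IsLocalMax (deriv V) z0 := hmax.isLocalMax (Icc_mem_nhds h0 h1)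
    have hd0 : deriv (deriv V) z0 = 0 := hloc.deriv_eq_zero
    have he := heq z0 hzI
    rw [hd0] at he
    set M := deriv V z0 with hM
    have hM0 : 0 ≤ M := hmono z0 hz0
    rw [max_eq_right hM0] at he
    have hVb := (hbound z0 hz0).2
    have hz0α : 0 ≤ z0 ^ α / B ^ (α-1) := by positivity
    have hkM : 0 ≤ k * M := mul_nonneg hk hM0
    have hρV : ρ * V z0 ≤ A := by
      calc ρ * V z0 ≤ ρ * (zb ^ α / (ρ * B ^ (α-1))) :=
            mul_le_mul_of_nonneg_left hVb hρ.le
        _ = A := by rw [hA]; field_simp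
    have hineq : (1-γ) * C * M ^ (1/(1-γ)) ≤ A := by linarith
    have hYp : M ^ (1/(1-γ)) ≤ A / ((1-γ)*C) := by
      rw [le_div_iff₀ (by positivity)]
      calc M ^ (1/(1-γ)) * ((1-γ)*C) = (1-γ) * C * M ^ (1/(1-γ)) := by ring
        _ ≤ A := hineq
    have hMpow : (M ^ (1/(1-γ))) ^ (1-γ) = M := by
      rw [← Real.rpow_mul hM0, one_div_mul_cancel (ne_of_gt h1γ), Real.rpow_one]
    have hfinal : M ≤ (A/((1-γ)*C)) ^ (1-γ) := by
      rw [← hMpow]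
      exact Real.rpow_le_rpow (Real.rpow_nonneg hM0 _) hYp h1γ.le
    have hEq : (A/((1-γ)*C)) ^ (1-γ) = RHS := by
      have h1 : A/((1-γ)*C) = (zb ^ α / ((1-γ) * B ^ (α-1))) * C⁻¹ := by
        rw [hA]; field_simp
      rw [h1, Real.mul_rpow (by positivity) (by positivity),
        Real.inv_rpow hCpos.le, hC, ← Real.rpow_mul (by positivity),
        div_mul_cancel₀ _ (ne_of_gt h1γ), ← Real.inv_rpow (by positivity),
        inv_div]
    rw [← hEq]
    exact hfinal
  intro z hzz
  exact le_trans (hmax hzz) key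
end

section
/- For k₁, k₂ ≥ 0, let V^{k₁}, V^{k₂} ∈ C²((0, z̄)) ∩ C¹([0, z̄]) be solutions of the auxiliary HJB equation -（σ²/2）V'' + ρV - (1-γ)(γ/w)^{γ/(1-γ)} max(0,V')^{1/(1-γ)} - k_i V' - z^α/B^{α-1} = 0 with Neumann boundary conditions, each satisfying the gradient bound 0 ≤ (V^{k_i})' ≤ M := [z̄^α/((1-γ)B^{α-1})]^{1-γ}(w/γ)^γ. Then ‖V^{k₁} - V^{k₂}‖_∞ ≤ (M/ρ) |k₁ - k₂|. -/
/-!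
At an interior maximum `z₀` of `V₁ - V₂` one has `V₁' = V₂'` and `V₁'' ≤ V₂''`, so subtracting the
two equations leaves `ρ (V₁ - V₂)(z₀) ≤ (k₁ - k₂) V₂'(z₀) ≤ M |k₁ - k₂|`. The Neumann conditions do
not keep the maximum away from the boundary, so one maximizes `V₁ - V₂ + ε (z - a)(b - z)` instead:
its derivative has the strict sign at both ends, and the first- and second-order conditions then
hold up to `O(ε)`. The error in the Hamiltonian is controlled because `p ↦ p ^ (1 / (1 - γ))` is
Lipschitz on `[0, M]`; finally `ε → 0`.
-/

open Set Filter Topology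

theorem IsLocalMax.deriv_deriv_nonpos {f : ℝ → ℝ} {a : ℝ} (h : IsLocalMax f a)
    (hc : ContinuousAt f a) : deriv (deriv f) a ≤ 0 := by
  by_contra! hpos
  have hconst : f =ᶠ[𝓝 a] fun _ => f a :=
    (h.and (isLocalMin_of_deriv_deriv_pos hpos h.deriv_eq_zero hc)).mono
      fun x hx => le_antisymm hx.1 hx.2
  refine hpos.ne' ?_
  rw [hconst.deriv.deriv_eq]
  simp

theorem exists_lt_of_deriv_pos_left {f f' : ℝ → ℝ} {a b : ℝ} (hab : a < b)
    (hf : ContinuousOn f (Icc a b)) (hf' : ∀ x ∈ Ioo a b, HasDerivAt f (f' x) x)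
    (hf'a : ContinuousWithinAt f' (Icc a b) a) (hpos : 0 < f' a) :
    ∃ t ∈ Ioc a b, f a < f t := by
  have hev := hf'a.eventually_const_lt hpos
  rw [nhdsWithin_Icc_eq_nhdsGE hab] at hev
  obtain ⟨u, hau, hu⟩ := mem_nhdsGE_iff_exists_Ico_subset.1 hev
  have hat : a < min u b := lt_min hau hab
  obtain ⟨c, hc, hslope⟩ := exists_hasDerivAt_eq_slope f f' hat
    (hf.mono (Icc_subset_Icc_right (min_le_right _ _)))
    fun x hx => hf' x ⟨hx.1, hx.2.trans_le (min_le_right _ _)⟩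
  have hc' : 0 < f' c := hu ⟨hc.1.le, hc.2.trans_le (min_le_left _ _)⟩
  rw [hslope, div_pos_iff_of_pos_right (sub_pos.2 hat), sub_pos] at hc'
  exact ⟨min u b, ⟨hat, min_le_right _ _⟩, hc'⟩

theorem exists_lt_of_deriv_neg_right {f f' : ℝ → ℝ} {a b : ℝ} (hab : a < b)
    (hf : ContinuousOn f (Icc a b)) (hf' : ∀ x ∈ Ioo a b, HasDerivAt f (f' x) x)
    (hf'b : ContinuousWithinAt f' (Icc a b) b) (hneg : f' b < 0) :
    ∃ t ∈ Ico a b, f b < f t := by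
  have hev := hf'b.eventually_lt_const hneg
  rw [nhdsWithin_Icc_eq_nhdsLE hab] at hev
  obtain ⟨l, hlb, hl⟩ := mem_nhdsLE_iff_exists_Ioc_subset.1 hev
  have htb : max l a < b := max_lt hlb hab
  obtain ⟨c, hc, hslope⟩ := exists_hasDerivAt_eq_slope f f' htb
    (hf.mono (Icc_subset_Icc_left (le_max_right _ _)))
    fun x hx => hf' x ⟨(le_max_right _ _).trans_lt hx.1, hx.2⟩
  have hc' : f' c < 0 := hl ⟨(le_max_left _ _).trans_lt hc.1, hc.2.le⟩
  rw [hslope, div_lt_iff₀ (sub_pos.2 htb), zero_mul, sub_neg] at hc'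
  exact ⟨max l a, ⟨le_max_right _ _, htb⟩, hc'⟩

theorem exists_approx_max_of_neumann {u u' u'' : ℝ → ℝ} {a b ε z : ℝ} (hab : a < b)
    (hε : 0 < ε) (hu : ContinuousOn u (Icc a b)) (hu' : ∀ x ∈ Ioo a b, HasDerivAt u (u' x) x)
    (hu'c : ContinuousOn u' (Icc a b)) (hu'' : ∀ x ∈ Ioo a b, HasDerivAt u' (u'' x) x)
    (ha : 0 ≤ u' a) (hb : u' b ≤ 0) (hz : z ∈ Icc a b) :
    ∃ z₀ ∈ Ioo a b, u z ≤ u z₀ + ε * (b - a) ^ 2 ∧ |u' z₀| ≤ ε * (b - a) ∧ u'' z₀ ≤ 2 * ε := by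
  set W : ℝ → ℝ := fun x => u x + ε * ((x - a) * (b - x))
  set W' : ℝ → ℝ := fun x => u' x + ε * (a + b - 2 * x)
  have hbump : ∀ x, HasDerivAt (fun x => ε * ((x - a) * (b - x))) (ε * (a + b - 2 * x)) x :=
    fun x => ((((hasDerivAt_id' x).sub_const a).mul
      ((hasDerivAt_id' x).const_sub b)).const_mul ε).congr_deriv (by ring)
  have hW : ∀ x ∈ Ioo a b, HasDerivAt W (W' x) x := fun x hx => (hu' x hx).add (hbump x)
  have hWc : ContinuousOn W (Icc a b) := hu.add (by fun_prop)
  have hW'c : ContinuousOn W' (Icc a b) := hu'c.add (by fun_prop)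
  obtain ⟨z₀, hz₀, hmax⟩ := isCompact_Icc.exists_isMaxOn (nonempty_Icc.2 hab.le) hWc
  have hz₀a : z₀ ≠ a := by
    rintro rfl
    obtain ⟨t, ht, hlt⟩ := exists_lt_of_deriv_pos_left hab hWc hW
      (hW'c.continuousWithinAt hz₀) (by simp only [W']; nlinarith)
    exact (hmax (Ioc_subset_Icc_self ht)).not_gt hlt
  have hz₀b : z₀ ≠ b := by
    rintro rfl
    obtain ⟨t, ht, hlt⟩ := exists_lt_of_deriv_neg_right hab hWc hW
      (hW'c.continuousWithinAt hz₀) (by simp only [W']; nlinarith)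
    exact (hmax (Ico_subset_Icc_self ht)).not_gt hlt
  have hz₀' : z₀ ∈ Ioo a b := ⟨hz₀.1.lt_of_ne' hz₀a, hz₀.2.lt_of_ne hz₀b⟩
  have hloc : IsLocalMax W z₀ := hmax.isLocalMax (Icc_mem_nhds hz₀'.1 hz₀'.2)
  have hW'z₀ : W' z₀ = 0 := hloc.hasDerivAt_eq_zero (hW z₀ hz₀')
  have hW''z₀ : u'' z₀ + ε * -2 ≤ 0 := by
    have hderiv : deriv W =ᶠ[𝓝 z₀] W' :=
      eventually_of_mem (Ioo_mem_nhds hz₀'.1 hz₀'.2) fun x hx => (hW x hx).deriv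
    have hW'' : HasDerivAt W' (u'' z₀ + ε * -2) z₀ :=
      ((hu'' z₀ hz₀').add ((((hasDerivAt_id' z₀).const_mul 2).const_sub (a + b)).const_mul
        ε)).congr_deriv (by ring)
    simpa [hderiv.deriv_eq, hW''.deriv] using hloc.deriv_deriv_nonpos (hW z₀ hz₀').continuousAt
  refine ⟨z₀, hz₀', ?_, ?_, by linarith⟩
  · have hWz : u z + ε * ((z - a) * (b - z)) ≤ u z₀ + ε * ((z₀ - a) * (b - z₀)) := hmax hz
    have hbz : 0 ≤ ε * ((z - a) * (b - z)) :=
      mul_nonneg hε.le (mul_nonneg (sub_nonneg.2 hz.1) (sub_nonneg.2 hz.2))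
    have hbz₀ : ε * ((z₀ - a) * (b - z₀)) ≤ ε * (b - a) ^ 2 := by
      gcongr
      rw [sq]
      exact mul_le_mul (by linarith [hz₀'.2]) (by linarith [hz₀'.1]) (by linarith [hz₀'.2])
        (by linarith)
    linarith
  · simp only [W'] at hW'z₀
    rw [show u' z₀ = ε * (2 * z₀ - a - b) by linarith, abs_mul, abs_of_pos hε]
    exact mul_le_mul_of_nonneg_left (abs_le.2 ⟨by linarith [hz₀'.1], by linarith [hz₀'.2]⟩) hε.le

theorem abs_rpow_sub_rpow_le {r M p q : ℝ} (hr : 1 ≤ r) (hp : p ∈ Icc 0 M) (hq : q ∈ Icc 0 M) :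
    |p ^ r - q ^ r| ≤ r * M ^ (r - 1) * |p - q| :=
  (convex_Icc 0 M).norm_image_sub_le_of_norm_hasDerivWithin_le
    (fun x _ => (Real.hasDerivAt_rpow_const (Or.inr hr)).hasDerivWithinAt)
    (fun x hx => by
      rw [Real.norm_eq_abs, abs_of_nonneg (by have := hx.1; positivity)]
      gcongr
      exacts [hx.1, hx.2])
    hq hp

theorem mul_max_zero_rpow_sub_le {c r M p q : ℝ} (hr : 1 ≤ r) (hp : p ∈ Icc 0 M)
    (hq : q ∈ Icc 0 M) :
    c * max 0 p ^ r - c * max 0 q ^ r ≤ |c| * (r * M ^ (r - 1)) * |p - q| := by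
  rw [max_eq_right hp.1, max_eq_right hq.1, ← mul_sub, mul_assoc]
  exact (le_abs_self _).trans
    (abs_mul c _ ▸ mul_le_mul_of_nonneg_left (abs_rpow_sub_rpow_le hr hp hq) (abs_nonneg c))

theorem le_of_forall_pos_le_add_mul {x y C : ℝ} (h : ∀ ε > 0, x ≤ y + ε * C) : x ≤ y := by
  have hlim : Tendsto (fun ε => y + ε * C) (𝓝[>] 0) (𝓝 y) := by
    have : Continuous fun ε : ℝ => y + ε * C := by fun_prop
    simpa using (this.tendsto 0).mono_left nhdsWithin_le_nhds
  exact ge_of_tendsto hlim (eventually_nhdsWithin_of_forall h)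

theorem mul_sub_le_of_neumann_hjb {a b σ ρ k₁ k₂ L M : ℝ} {H f V₁ V₂ : ℝ → ℝ} (hab : a < b)
    (hρ : 0 ≤ ρ) (hH : ∀ p ∈ Icc 0 M, ∀ q ∈ Icc 0 M, H p - H q ≤ L * |p - q|)
    (hV₁ : DifferentiableOn ℝ V₁ (Icc a b)) (hV₁' : ContinuousOn (deriv V₁) (Icc a b))
    (hV₁'' : ∀ z ∈ Ioo a b, DifferentiableAt ℝ (deriv V₁) z)
    (hV₂ : DifferentiableOn ℝ V₂ (Icc a b)) (hV₂' : ContinuousOn (deriv V₂) (Icc a b))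
    (hV₂'' : ∀ z ∈ Ioo a b, DifferentiableAt ℝ (deriv V₂) z)
    (heq₁ : ∀ z ∈ Ioo a b, -(σ ^ 2 / 2) * deriv (deriv V₁) z + ρ * V₁ z -
      (H (deriv V₁ z) + k₁ * deriv V₁ z + f z) = 0)
    (heq₂ : ∀ z ∈ Ioo a b, -(σ ^ 2 / 2) * deriv (deriv V₂) z + ρ * V₂ z -
      (H (deriv V₂ z) + k₂ * deriv V₂ z + f z) = 0)
    (hbc₁a : deriv V₁ a = 0) (hbc₁b : deriv V₁ b = 0)
    (hbc₂a : deriv V₂ a = 0) (hbc₂b : deriv V₂ b = 0)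
    (hgrad₁ : ∀ z ∈ Icc a b, deriv V₁ z ∈ Icc 0 M) (hgrad₂ : ∀ z ∈ Icc a b, deriv V₂ z ∈ Icc 0 M)
    {z : ℝ} (hz : z ∈ Icc a b) :
    ρ * (V₁ z - V₂ z) ≤ M * |k₁ - k₂| := by
  have hasDerivAt_of_Ioo {V : ℝ → ℝ} (hV : DifferentiableOn ℝ V (Icc a b)) (x : ℝ)
      (hx : x ∈ Ioo a b) : HasDerivAt V (deriv V x) x :=
    (hV.differentiableAt (Icc_mem_nhds hx.1 hx.2)).hasDerivAt
  refine le_of_forall_pos_le_add_mul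
    (C := σ ^ 2 + (|L| + |k₁|) * (b - a) + ρ * (b - a) ^ 2) fun ε hε => ?_
  obtain ⟨z₀, hz₀, hle, hd, hdd⟩ := exists_approx_max_of_neumann (u := fun x => V₁ x - V₂ x)
    (u'' := fun x => deriv (deriv V₁) x - deriv (deriv V₂) x) hab hε
    (hV₁.continuousOn.sub hV₂.continuousOn)
    (fun x hx => (hasDerivAt_of_Ioo hV₁ x hx).sub (hasDerivAt_of_Ioo hV₂ x hx))
    (hV₁'.sub hV₂') (fun x hx => (hV₁'' x hx).hasDerivAt.sub (hV₂'' x hx).hasDerivAt)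
    (by simp [hbc₁a, hbc₂a]) (by simp [hbc₁b, hbc₂b]) hz
  have hz₀' := Ioo_subset_Icc_self hz₀
  have hHz₀ := hH _ (hgrad₁ z₀ hz₀') _ (hgrad₂ z₀ hz₀')
  have hL : L * |deriv V₁ z₀ - deriv V₂ z₀| ≤ |L| * (ε * (b - a)) :=
    mul_le_mul (le_abs_self L) hd (abs_nonneg _) (abs_nonneg L)
  have hk₁ : k₁ * (deriv V₁ z₀ - deriv V₂ z₀) ≤ |k₁| * (ε * (b - a)) :=
    (le_abs_self _).trans (abs_mul k₁ _ ▸ mul_le_mul_of_nonneg_left hd (abs_nonneg k₁))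
  have hk : (k₁ - k₂) * deriv V₂ z₀ ≤ |k₁ - k₂| * M :=
    mul_le_mul (le_abs_self _) (hgrad₂ z₀ hz₀').2 (hgrad₂ z₀ hz₀').1 (abs_nonneg _)
  have hσ : σ ^ 2 / 2 * (deriv (deriv V₁) z₀ - deriv (deriv V₂) z₀) ≤ σ ^ 2 * ε := by
    nlinarith [sq_nonneg σ]
  have hρz : ρ * (V₁ z - V₂ z) ≤ ρ * (V₁ z₀ - V₂ z₀) + ρ * (ε * (b - a) ^ 2) := by
    rw [← mul_add]
    exact mul_le_mul_of_nonneg_left hle hρ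
  linarith [heq₁ z₀ hz₀, heq₂ z₀ hz₀]

theorem stmt_4_general (zb σ ρ w B α γ : ℝ)
(hz : 0 < zb) (hρ : 0 < ρ)
    (hγ : γ ∈ Set.Ioo (0:ℝ) 1)
    (k₁ k₂ : ℝ)
    (V₁ V₂ : ℝ → ℝ)
    (hV₁ : DifferentiableOn ℝ V₁ (Set.Icc 0 zb))
    (hV₁' : ContinuousOn (deriv V₁) (Set.Icc 0 zb))
    (hV₁'' : ∀ z ∈ Set.Ioo 0 zb, DifferentiableAt ℝ (deriv V₁) z)
    (hV₂ : DifferentiableOn ℝ V₂ (Set.Icc 0 zb))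
    (hV₂' : ContinuousOn (deriv V₂) (Set.Icc 0 zb))
    (hV₂'' : ∀ z ∈ Set.Ioo 0 zb, DifferentiableAt ℝ (deriv V₂) z)
    (heq₁ : ∀ z ∈ Set.Ioo 0 zb,
      -(σ^2/2) * deriv (deriv V₁) z + ρ * V₁ z -
        ((1-γ) * (γ/w) ^ (γ/(1-γ)) * (max 0 (deriv V₁ z)) ^ (1/(1-γ))
          + k₁ * deriv V₁ z + z ^ α / B ^ (α-1)) = 0)
    (heq₂ : ∀ z ∈ Set.Ioo 0 zb,
      -(σ^2/2) * deriv (deriv V₂) z + ρ * V₂ z -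
        ((1-γ) * (γ/w) ^ (γ/(1-γ)) * (max 0 (deriv V₂ z)) ^ (1/(1-γ))
          + k₂ * deriv V₂ z + z ^ α / B ^ (α-1)) = 0)
    (hbc₁0 : deriv V₁ 0 = 0) (hbc₁1 : deriv V₁ zb = 0)
    (hbc₂0 : deriv V₂ 0 = 0) (hbc₂1 : deriv V₂ zb = 0)
    (M : ℝ)
    (hgrad₁ : ∀ z ∈ Set.Icc 0 zb, 0 ≤ deriv V₁ z ∧ deriv V₁ z ≤ M)
    (hgrad₂ : ∀ z ∈ Set.Icc 0 zb, 0 ≤ deriv V₂ z ∧ deriv V₂ z ≤ M) :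
    ∀ z ∈ Set.Icc 0 zb, |V₁ z - V₂ z| ≤ M / ρ * |k₁ - k₂| := by
  intro z hzmem
  have hr : 1 ≤ 1 / (1 - γ) := by
    rw [le_div_iff₀ (by linarith [hγ.2])]
    linarith [hγ.1]
  have hH : ∀ p ∈ Icc 0 M, ∀ q ∈ Icc 0 M, _ := fun p hp q hq =>
    mul_max_zero_rpow_sub_le (c := (1 - γ) * (γ / w) ^ (γ / (1 - γ))) hr hp hq
  have h₁₂ := mul_sub_le_of_neumann_hjb hz hρ.le hH hV₁ hV₁' hV₁'' hV₂ hV₂' hV₂'' heq₁ heq₂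
    hbc₁0 hbc₁1 hbc₂0 hbc₂1 hgrad₁ hgrad₂ hzmem
  have h₂₁ := mul_sub_le_of_neumann_hjb hz hρ.le hH hV₂ hV₂' hV₂'' hV₁ hV₁' hV₁'' heq₂ heq₁
    hbc₂0 hbc₂1 hbc₁0 hbc₁1 hgrad₂ hgrad₁ hzmem
  rw [abs_sub_comm k₂] at h₂₁
  have hρV : |ρ * (V₁ z - V₂ z)| ≤ M * |k₁ - k₂| := abs_le.2 ⟨by linarith, h₁₂⟩
  rw [abs_mul, abs_of_pos hρ] at hρV
  rwa [div_mul_eq_mul_div, le_div_iff₀ hρ, mul_comm]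

/-- Lipschitz dependence of the HJB solution on the drift
parameter k, in the sup norm. -/
theorem stmt_4 (zb σ ρ w B α γ : ℝ)
(hz : 0 < zb) (hσ : 0 < σ) (hρ : 0 < ρ) (hw : 0 < w) (hB : 0 < B)
    (hα : α ∈ Set.Ioo (0:ℝ) 1) (hγ : γ ∈ Set.Ioo (0:ℝ) 1)
    (k₁ k₂ : ℝ) (hk₁ : 0 ≤ k₁) (hk₂ : 0 ≤ k₂)
    (V₁ V₂ : ℝ → ℝ)
    (hV₁ : DifferentiableOn ℝ V₁ (Set.Icc 0 zb))
    (hV₁' : ContinuousOn (deriv V₁) (Set.Icc 0 zb))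
    (hV₁'' : ∀ z ∈ Set.Ioo 0 zb, DifferentiableAt ℝ (deriv V₁) z)
    (hV₁''c : ContinuousOn (deriv (deriv V₁)) (Set.Ioo 0 zb))
    (hV₂ : DifferentiableOn ℝ V₂ (Set.Icc 0 zb))
    (hV₂' : ContinuousOn (deriv V₂) (Set.Icc 0 zb))
    (hV₂'' : ∀ z ∈ Set.Ioo 0 zb, DifferentiableAt ℝ (deriv V₂) z)
    (hV₂''c : ContinuousOn (deriv (deriv V₂)) (Set.Ioo 0 zb))
    (heq₁ : ∀ z ∈ Set.Ioo 0 zb,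
      -(σ^2/2) * deriv (deriv V₁) z + ρ * V₁ z -
        ((1-γ) * (γ/w) ^ (γ/(1-γ)) * (max 0 (deriv V₁ z)) ^ (1/(1-γ))
          + k₁ * deriv V₁ z + z ^ α / B ^ (α-1)) = 0)
    (heq₂ : ∀ z ∈ Set.Ioo 0 zb,
      -(σ^2/2) * deriv (deriv V₂) z + ρ * V₂ z -
        ((1-γ) * (γ/w) ^ (γ/(1-γ)) * (max 0 (deriv V₂ z)) ^ (1/(1-γ))
          + k₂ * deriv V₂ z + z ^ α / B ^ (α-1)) = 0)
    (hbc₁0 : deriv V₁ 0 = 0) (hbc₁1 : deriv V₁ zb = 0)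
    (hbc₂0 : deriv V₂ 0 = 0) (hbc₂1 : deriv V₂ zb = 0)
    (M : ℝ) (hM : M = (zb ^ α / ((1-γ) * B ^ (α-1))) ^ (1-γ) * (w/γ) ^ γ)
    (hgrad₁ : ∀ z ∈ Set.Icc 0 zb, 0 ≤ deriv V₁ z ∧ deriv V₁ z ≤ M)
    (hgrad₂ : ∀ z ∈ Set.Icc 0 zb, 0 ≤ deriv V₂ z ∧ deriv V₂ z ≤ M) :
    ∀ z ∈ Set.Icc 0 zb, |V₁ z - V₂ z| ≤ M / ρ * |k₁ - k₂| :=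
  stmt_4_general zb σ ρ w B α γ hz hρ hγ k₁ k₂ V₁ V₂ hV₁ hV₁' hV₁'' hV₂ hV₂' hV₂'' heq₁ heq₂ hbc₁0
    hbc₁1 hbc₂0 hbc₂1 M hgrad₁ hgrad₂
end

section
/- For k₁ < k₂ in [0, ∞), let V^{k₁}, V^{k₂} be classical solutions of the auxiliary HJB equation with constants k₁ and k₂ respectively (Neumann boundary conditions on [0, z̄]), both having strictly positive derivative in (0, z̄). Then V^{k₁}(z) < V^{k₂}(z) for every z ∈ [0, z̄], i.e., the value function is strictly increasing in the drift parameter k. -/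
/-! With `A = σ²/2`, `c = (1-γ) (γ/w)^(γ/(1-γ))`, `s = 1/(1-γ)` and `Mᵢ = max 0 Vᵢ' ^ s`,
the difference `u = V₂ - V₁` solves `A u'' = ρ u - c (M₂ - M₁) - k₂ u' - (k₂ - k₁) V₁'`.
Since `t ↦ max 0 t ^ s` is Lipschitz on bounded sets, `A u'' ≤ ρ u + K |u'|`, and `A u'' < ρ u`
wherever `u' = 0` because `V₁' > 0`. Hence a nonpositive minimum of `u` cannot sit inside the
interval (there `u' = 0 ≤ u''`), and by the Hopf lemma it cannot sit at an endpoint either, where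
it would force `u' ≠ 0`, against the Neumann condition. -/

open Set Filter Topology

theorem IsLocalMin.second_deriv_nonneg {u p : ℝ → ℝ} {x q : ℝ} (hmin : IsLocalMin u x)
    (hu : ∀ᶠ y in 𝓝 x, HasDerivAt u (p y) y) (hp : HasDerivAt p q x) : 0 ≤ q := by
  by_contra! hq
  have hderiv : deriv u =ᶠ[𝓝 x] p := hu.mono fun y hy => hy.deriv
  have hmax : IsLocalMax u x := by
    refine isLocalMax_of_deriv_deriv_neg ?_ ?_ hu.self_of_nhds.continuousAt
    · rwa [hderiv.deriv_eq, hp.deriv]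
    · rw [hderiv.self_of_nhds, hmin.hasDerivAt_eq_zero hu.self_of_nhds]
  have hconst : ∀ᶠ y in 𝓝 x, u y = u x := (hmin.and hmax).mono fun y h => le_antisymm h.2 h.1
  have hp0 : p =ᶠ[𝓝 x] fun _ => 0 :=
    (hconst.eventually_nhds.and hu).mono fun y ⟨hc, hd⟩ =>
      (hd.congr_of_eventuallyEq (hc.mono fun _ h => h.symm)).unique (hasDerivAt_const y (u x))
  exact hq.ne ((hp.congr_of_eventuallyEq hp0.symm).unique (hasDerivAt_const x 0))

/-- The barrier `c (exp (r (x - a)) - 1)` is a strict subsolution of `A v'' = ρ v + K |v'|`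
because `ρ + K r < A r²`; so `w - barrier` has no negative interior minimum. -/
theorem exp_barrier_le {w p q : ℝ → ℝ} {a b A ρ K c r : ℝ} (hA : 0 ≤ A) (hρ : 0 ≤ ρ)
    (hc : 0 < c) (hr : 0 ≤ r) (hrA : ρ + K * r < A * r ^ 2)
    (hw : ContinuousOn w (Icc a b)) (hwp : ∀ x ∈ Ioo a b, HasDerivAt w (p x) x)
    (hpq : ∀ x ∈ Ioo a b, HasDerivAt p (q x) x)
    (hineq : ∀ x ∈ Ioo a b, A * q x ≤ ρ * w x + K * |p x|)
    (hwa : 0 ≤ w a) (hwb : c * (Real.exp (r * (b - a)) - 1) ≤ w b) :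
    ∀ x ∈ Icc a b, c * (Real.exp (r * (x - a)) - 1) ≤ w x := by
  set v := fun x => w x - c * (Real.exp (r * (x - a)) - 1)
  intro x hx
  obtain ⟨z, hz, hmin⟩ : ∃ z ∈ Icc a b, IsMinOn v (Icc a b) z :=
    isCompact_Icc.exists_isMinOn (nonempty_Icc.2 (hx.1.trans hx.2)) (hw.sub (by fun_prop))
  suffices 0 ≤ v z from sub_nonneg.1 (this.trans (hmin hx))
  by_contra! hneg
  have hzI : z ∈ Ioo a b := by
    refine ⟨hz.1.lt_of_ne ?_, hz.2.lt_of_ne ?_⟩ <;> rintro rfl <;> simp [v] at hneg <;> linarith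
  have hexp : ∀ y, HasDerivAt (fun y => Real.exp (r * (y - a))) (r * Real.exp (r * (y - a))) y :=
    fun y => by simpa [mul_comm] using (((hasDerivAt_id' y).sub_const a).const_mul r).exp
  have hv' : ∀ y ∈ Ioo a b, HasDerivAt v (p y - c * (r * Real.exp (r * (y - a)))) y :=
    fun y hy => (hwp y hy).sub (((hexp y).sub_const 1).const_mul c)
  have hv'' := (hpq z hzI).sub (((hexp z).const_mul r).const_mul c)
  have hloc : IsLocalMin v z := hmin.isLocalMin (Icc_mem_nhds hzI.1 hzI.2)
  set E := Real.exp (r * (z - a))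
  have hpz : p z = c * (r * E) := sub_eq_zero.1 (hloc.hasDerivAt_eq_zero (hv' z hzI))
  have hqz : c * (r * (r * E)) ≤ q z := sub_nonneg.1 <|
    hloc.second_deriv_nonneg (mem_of_superset (Ioo_mem_nhds hzI.1 hzI.2) hv') hv''
  have hcE : 0 < c * E := mul_pos hc (Real.exp_pos _)
  have hwz : w z < c * (E - 1) := by simpa [v, sub_neg] using hneg
  have h1 : A * (c * (r * (r * E))) ≤ A * q z := mul_le_mul_of_nonneg_left hqz hA
  have h2 : ρ * w z ≤ ρ * (c * (E - 1)) := mul_le_mul_of_nonneg_left hwz.le hρ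
  have h3 : (ρ + K * r) * (c * E) < A * r ^ 2 * (c * E) := mul_lt_mul_of_pos_right hrA hcE
  have h4 := hineq z hzI
  rw [hpz, abs_of_nonneg (by positivity)] at h4
  nlinarith [mul_nonneg hρ hc.le]

theorem le_of_mul_sub_le_sub {w p : ℝ → ℝ} {a b m : ℝ} (hab : a < b)
    (hw : ContinuousOn w (Icc a b)) (hwp : ∀ x ∈ Ioo a b, HasDerivAt w (p x) x)
    (hpa : ContinuousWithinAt p (Icc a b) a)
    (hbound : ∀ x ∈ Icc a b, m * (x - a) ≤ w x - w a) : m ≤ p a := by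
  by_contra! hlt
  have hnear : ∀ᶠ x in 𝓝[>] a, p x < m :=
    nhdsWithin_le_of_mem (Icc_mem_nhdsGT hab) (hpa.eventually (gt_mem_nhds hlt))
  obtain ⟨c, hac, hc⟩ := (nhdsGT_basis a).eventually_iff.1 hnear
  set d := min c b
  have had : a < d := lt_min hac hab
  obtain ⟨ξ, hξ, hslope⟩ := exists_hasDerivAt_eq_slope w p had
    (hw.mono (Icc_subset_Icc_right (min_le_right _ _)))
    (fun x hx => hwp x ⟨hx.1, hx.2.trans_le (min_le_right _ _)⟩)
  have hpξ : p ξ < m := hc ⟨hξ.1, hξ.2.trans_le (min_le_left _ _)⟩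
  have hmd : m ≤ (w d - w a) / (d - a) :=
    (le_div_iff₀ (sub_pos.2 had)).2 (hbound d ⟨had.le, min_le_right _ _⟩)
  linarith

theorem hopf_lemma_left {w p q : ℝ → ℝ} {a b A ρ K : ℝ} (hab : a < b) (hA : 0 < A)
    (hρ : 0 ≤ ρ) (hK : 0 ≤ K) (hw : ContinuousOn w (Icc a b))
    (hwp : ∀ x ∈ Ioo a b, HasDerivAt w (p x) x)
    (hpq : ∀ x ∈ Ioo a b, HasDerivAt p (q x) x) (hpa : ContinuousWithinAt p (Icc a b) a)
    (hwa : w a = 0) (hpos : ∀ x ∈ Ioo a b, 0 < w x)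
    (hineq : ∀ x ∈ Ioo a b, A * q x ≤ ρ * w x + K * |p x|) : 0 < p a := by
  obtain ⟨δ, haδ, hδb⟩ := exists_between hab
  have hIcc : Icc a δ ⊆ Icc a b := Icc_subset_Icc_right hδb.le
  have hIoo : Ioo a δ ⊆ Ioo a b := Ioo_subset_Ioo_right hδb.le
  set r := 1 + (K + ρ) / A
  have hr : 1 ≤ r := le_add_of_nonneg_right (by positivity)
  have hrA : ρ + K * r < A * r ^ 2 := by
    have : A * r = A + K + ρ := by simp only [r]; field_simp; ring
    nlinarith
  have hE : 0 < Real.exp (r * (δ - a)) - 1 :=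
    sub_pos.2 (Real.one_lt_exp_iff.2 (mul_pos (by linarith) (by linarith)))
  set c := w δ / (Real.exp (r * (δ - a)) - 1)
  have hc : 0 < c := div_pos (hpos δ ⟨haδ, hδb⟩) hE
  have hbarrier := exp_barrier_le hA.le hρ hc (by linarith) hrA (hw.mono hIcc)
    (fun x hx => hwp x (hIoo hx)) (fun x hx => hpq x (hIoo hx)) (fun x hx => hineq x (hIoo hx))
    hwa.ge (div_mul_cancel₀ _ hE.ne').le
  have hlin : ∀ x ∈ Icc a δ, c * r * (x - a) ≤ w x - w a := fun x hx => by
    rw [hwa, sub_zero]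
    refine le_trans ?_ (hbarrier x hx)
    nlinarith [Real.add_one_le_exp (r * (x - a))]
  exact (mul_pos hc (by linarith)).trans_le <|
    le_of_mul_sub_le_sub haδ (hw.mono hIcc) (fun x hx => hwp x (hIoo hx)) (hpa.mono hIcc) hlin

theorem hopf_lemma_right {w p q : ℝ → ℝ} {a b A ρ K : ℝ} (hab : a < b) (hA : 0 < A)
    (hρ : 0 ≤ ρ) (hK : 0 ≤ K) (hw : ContinuousOn w (Icc a b))
    (hwp : ∀ x ∈ Ioo a b, HasDerivAt w (p x) x)
    (hpq : ∀ x ∈ Ioo a b, HasDerivAt p (q x) x) (hpb : ContinuousWithinAt p (Icc a b) b)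
    (hwb : w b = 0) (hpos : ∀ x ∈ Ioo a b, 0 < w x)
    (hineq : ∀ x ∈ Ioo a b, A * q x ≤ ρ * w x + K * |p x|) : p b < 0 := by
  have hmem : ∀ x ∈ Ioo (-b) (-a), -x ∈ Ioo a b :=
    fun x hx => ⟨lt_neg_of_lt_neg hx.2, neg_lt_of_neg_lt hx.1⟩
  have hmaps : MapsTo Neg.neg (Icc (-b) (-a)) (Icc a b) :=
    fun x hx => ⟨le_neg_of_le_neg hx.2, neg_le_of_neg_le hx.1⟩
  have := hopf_lemma_left (w := fun x => w (-x)) (p := fun x => -p (-x)) (q := fun x => q (-x))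
    (neg_lt_neg hab) hA hρ hK (hw.comp continuous_neg.continuousOn hmaps)
    (fun x hx => ((hwp (-x) (hmem x hx)).comp x (hasDerivAt_neg x)).congr_deriv (mul_neg_one _))
    (fun x hx => ((hpq (-x) (hmem x hx)).comp x (hasDerivAt_neg x)).neg.congr_deriv (by ring))
    (hpb.comp_of_eq continuous_neg.continuousWithinAt hmaps (neg_neg b)).neg
    (by simpa using hwb) (fun x hx => hpos _ (hmem x hx))
    (fun x hx => by simpa using hineq _ (hmem x hx))
  simpa using this

theorem pos_of_neumann_minimum_principle {u p q : ℝ → ℝ} {a b A ρ K : ℝ} (hab : a < b)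
    (hA : 0 < A) (hρ : 0 ≤ ρ) (hK : 0 ≤ K) (hu : ContinuousOn u (Icc a b))
    (hup : ∀ x ∈ Ioo a b, HasDerivAt u (p x) x) (hpq : ∀ x ∈ Ioo a b, HasDerivAt p (q x) x)
    (hp : ContinuousOn p (Icc a b)) (hpa : p a = 0) (hpb : p b = 0)
    (hcrit : ∀ x ∈ Ioo a b, p x = 0 → A * q x < ρ * u x)
    (hineq : ∀ x ∈ Ioo a b, A * q x ≤ ρ * u x + K * |p x|) :
    ∀ x ∈ Icc a b, 0 < u x := by
  obtain ⟨z, hz, hmin⟩ := isCompact_Icc.exists_isMinOn (nonempty_Icc.2 hab.le) hu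
  suffices 0 < u z from fun x hx => this.trans_le (hmin hx)
  by_contra! hm
  have hρm : ρ * u z ≤ 0 := mul_nonpos_of_nonneg_of_nonpos hρ hm
  have hinterior : ∀ x ∈ Ioo a b, u z < u x := by
    intro x hx
    refine (hmin (Ioo_subset_Icc_self hx)).lt_of_ne fun hzx => ?_
    have hloc : IsLocalMin u x :=
      IsMinOn.isLocalMin (fun y hy => hzx ▸ hmin hy) (Icc_mem_nhds hx.1 hx.2)
    have hqx := hloc.second_deriv_nonneg (mem_of_superset (Ioo_mem_nhds hx.1 hx.2) hup) (hpq x hx)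
    have := hcrit x hx (hloc.hasDerivAt_eq_zero (hup x hx))
    rw [← hzx] at this
    linarith [mul_nonneg hA.le hqx]
  have hwp : ∀ x ∈ Ioo a b, HasDerivAt (fun x => u x - u z) (p x) x :=
    fun x hx => (hup x hx).sub_const _
  have hwpos : ∀ x ∈ Ioo a b, 0 < u x - u z := fun x hx => sub_pos.2 (hinterior x hx)
  have hwineq : ∀ x ∈ Ioo a b, A * q x ≤ ρ * (u x - u z) + K * |p x| := fun x hx => by
    linarith [hineq x hx]
  rcases hz.1.eq_or_lt with rfl | haz
  · exact (hopf_lemma_left hab hA hρ hK (hu.sub continuousOn_const) hwp hpq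
      (hp _ (left_mem_Icc.2 hab.le)) (sub_self _) hwpos hwineq).ne' hpa
  rcases hz.2.eq_or_lt with rfl | hzb
  · exact (hopf_lemma_right hab hA hρ hK (hu.sub continuousOn_const) hwp hpq
      (hp _ (right_mem_Icc.2 hab.le)) (sub_self _) hwpos hwineq).ne hpb
  exact (hinterior z ⟨haz, hzb⟩).false

theorem abs_rpow_sub_rpow_le_s5 {s P x y : ℝ} (hs : 1 ≤ s) (hx : x ∈ Icc 0 P)
    (hy : y ∈ Icc 0 P) :
    |y ^ s - x ^ s| ≤ s * P ^ (s - 1) * |y - x| := by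
  have hderiv : ∀ t ∈ Icc 0 P,
      HasDerivWithinAt (fun t : ℝ => t ^ s) (s * t ^ (s - 1)) (Icc 0 P) t :=
    fun t _ => (Real.hasDerivAt_rpow_const (Or.inr hs)).hasDerivWithinAt
  have hbound : ∀ t ∈ Icc 0 P, ‖s * t ^ (s - 1)‖ ≤ s * P ^ (s - 1) := fun t ht => by
    rw [Real.norm_eq_abs, abs_of_nonneg (by have := ht.1; positivity)]
    exact mul_le_mul_of_nonneg_left (Real.rpow_le_rpow ht.1 ht.2 (by linarith)) (by linarith)
  exact (convex_Icc 0 P).norm_image_sub_le_of_norm_hasDerivWithin_le hderiv hbound hx hy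

theorem abs_max_zero_rpow_sub_le {s P x y : ℝ} (hs : 1 ≤ s) (hx : |x| ≤ P) (hy : |y| ≤ P) :
    |max 0 y ^ s - max 0 x ^ s| ≤ s * P ^ (s - 1) * |y - x| := by
  have hP : 0 ≤ P := (abs_nonneg x).trans hx
  have hmem : ∀ {t : ℝ}, |t| ≤ P → max 0 t ∈ Icc 0 P :=
    fun ht => ⟨le_max_left _ _, max_le hP ((le_abs_self _).trans ht)⟩
  calc |max 0 y ^ s - max 0 x ^ s| ≤ s * P ^ (s - 1) * |max 0 y - max 0 x| :=
        abs_rpow_sub_rpow_le_s5 hs (hmem hx) (hmem hy)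
    _ ≤ s * P ^ (s - 1) * |y - x| := by
        rw [max_comm 0 y, max_comm 0 x]
        exact mul_le_mul_of_nonneg_left (abs_max_sub_max_le_abs _ _ _) (by positivity)

theorem exists_abs_max_zero_rpow_sub_le {S : Set ℝ} (hS : IsCompact S) {f g : ℝ → ℝ}
    (hf : ContinuousOn f S) (hg : ContinuousOn g S) {s : ℝ} (hs : 1 ≤ s) :
    ∃ L, 0 ≤ L ∧ ∀ x ∈ S, |max 0 (g x) ^ s - max 0 (f x) ^ s| ≤ L * |g x - f x| := by
  obtain ⟨P₁, hP₁⟩ := hS.exists_bound_of_continuousOn hf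
  obtain ⟨P₂, hP₂⟩ := hS.exists_bound_of_continuousOn hg
  set P := max 0 (max P₁ P₂)
  refine ⟨s * P ^ (s - 1), by positivity, fun x hx => abs_max_zero_rpow_sub_le hs ?_ ?_⟩
  · exact (hP₁ x hx).trans ((le_max_left _ _).trans (le_max_right _ _))
  · exact (hP₂ x hx).trans ((le_max_right _ _).trans (le_max_right _ _))

theorem stmt_5_general (zb σ ρ w B α γ : ℝ)
(hz : 0 < zb) (hσ : 0 < σ) (hρ : 0 < ρ)
    (hγ : γ ∈ Set.Ioo (0:ℝ) 1)
    (k₁ k₂ : ℝ)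
    (V₁ V₂ : ℝ → ℝ)
    (hV₁ : DifferentiableOn ℝ V₁ (Set.Icc 0 zb))
    (hV₁' : ContinuousOn (deriv V₁) (Set.Icc 0 zb))
    (hV₁'' : ∀ z ∈ Set.Ioo 0 zb, DifferentiableAt ℝ (deriv V₁) z)
    (hV₂ : DifferentiableOn ℝ V₂ (Set.Icc 0 zb))
    (hV₂' : ContinuousOn (deriv V₂) (Set.Icc 0 zb))
    (hV₂'' : ∀ z ∈ Set.Ioo 0 zb, DifferentiableAt ℝ (deriv V₂) z)
    (heq₁ : ∀ z ∈ Set.Ioo 0 zb,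
      -(σ^2/2) * deriv (deriv V₁) z + ρ * V₁ z -
        ((1-γ) * (γ/w) ^ (γ/(1-γ)) * (max 0 (deriv V₁ z)) ^ (1/(1-γ))
          + k₁ * deriv V₁ z + z ^ α / B ^ (α-1)) = 0)
    (heq₂ : ∀ z ∈ Set.Ioo 0 zb,
      -(σ^2/2) * deriv (deriv V₂) z + ρ * V₂ z -
        ((1-γ) * (γ/w) ^ (γ/(1-γ)) * (max 0 (deriv V₂ z)) ^ (1/(1-γ))
          + k₂ * deriv V₂ z + z ^ α / B ^ (α-1)) = 0)
    (hbc₁0 : deriv V₁ 0 = 0) (hbc₁1 : deriv V₁ zb = 0)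
    (hbc₂0 : deriv V₂ 0 = 0) (hbc₂1 : deriv V₂ zb = 0)
    (hlt : k₁ < k₂)
    (hpos₁ : ∀ z ∈ Set.Ioo 0 zb, 0 < deriv V₁ z) :
    ∀ z ∈ Set.Icc 0 zb, V₁ z < V₂ z := by
  set c := (1-γ) * (γ/w) ^ (γ/(1-γ))
  set s := 1 / (1 - γ)
  have hs : 1 ≤ s := one_le_one_div (by linarith [hγ.2]) (by linarith [hγ.1])
  obtain ⟨L, hL, hLip⟩ := exists_abs_max_zero_rpow_sub_le isCompact_Icc hV₁' hV₂' hs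
  have hdiff : ∀ z ∈ Ioo 0 zb, σ ^ 2 / 2 * (deriv (deriv V₂) z - deriv (deriv V₁) z) =
      ρ * (V₂ z - V₁ z) - c * (max 0 (deriv V₂ z) ^ s - max 0 (deriv V₁ z) ^ s)
        - k₂ * (deriv V₂ z - deriv V₁ z) - (k₂ - k₁) * deriv V₁ z :=
    fun z hzI => by linarith [heq₁ z hzI, heq₂ z hzI]
  have hderiv : ∀ V : ℝ → ℝ, DifferentiableOn ℝ V (Icc 0 zb) →
      ∀ z ∈ Ioo 0 zb, HasDerivAt V (deriv V z) z :=
    fun V hV z hzI => (hV.differentiableAt (Icc_mem_nhds hzI.1 hzI.2)).hasDerivAt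
  have key := pos_of_neumann_minimum_principle (u := fun z => V₂ z - V₁ z)
    (q := fun z => deriv (deriv V₂) z - deriv (deriv V₁) z) (A := σ ^ 2 / 2)
    (K := |c| * L + |k₂|) hz (by positivity) hρ.le (by positivity)
    (hV₂.continuousOn.sub hV₁.continuousOn)
    (fun z hzI => (hderiv V₂ hV₂ z hzI).sub (hderiv V₁ hV₁ z hzI))
    (fun z hzI => (hV₂'' z hzI).hasDerivAt.sub (hV₁'' z hzI).hasDerivAt) (hV₂'.sub hV₁')
    (by simp [hbc₁0, hbc₂0]) (by simp [hbc₁1, hbc₂1]) ?crit ?ineq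
  · exact fun z hzI => sub_pos.1 (key z hzI)
  case crit =>
    intro z hzI hp
    rw [hdiff z hzI, sub_eq_zero.1 hp]
    nlinarith [mul_pos (sub_pos.2 hlt) (hpos₁ z hzI)]
  case ineq =>
    intro z hzI
    rw [hdiff z hzI]
    have hc := neg_abs_le (c * (max 0 (deriv V₂ z) ^ s - max 0 (deriv V₁ z) ^ s))
    have hk := neg_abs_le (k₂ * (deriv V₂ z - deriv V₁ z))
    rw [abs_mul] at hc hk
    nlinarith [hLip z (Ioo_subset_Icc_self hzI), abs_nonneg c,
      mul_pos (sub_pos.2 hlt) (hpos₁ z hzI)]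

/-- The HJB value function is strictly increasing in k. -/
theorem stmt_5 (zb σ ρ w B α γ : ℝ)
(hz : 0 < zb) (hσ : 0 < σ) (hρ : 0 < ρ) (hw : 0 < w) (hB : 0 < B)
    (hα : α ∈ Set.Ioo (0:ℝ) 1) (hγ : γ ∈ Set.Ioo (0:ℝ) 1)
    (k₁ k₂ : ℝ) (hk₁ : 0 ≤ k₁) (hk₂ : 0 ≤ k₂)
    (V₁ V₂ : ℝ → ℝ)
    (hV₁ : DifferentiableOn ℝ V₁ (Set.Icc 0 zb))
    (hV₁' : ContinuousOn (deriv V₁) (Set.Icc 0 zb))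
    (hV₁'' : ∀ z ∈ Set.Ioo 0 zb, DifferentiableAt ℝ (deriv V₁) z)
    (hV₁''c : ContinuousOn (deriv (deriv V₁)) (Set.Ioo 0 zb))
    (hV₂ : DifferentiableOn ℝ V₂ (Set.Icc 0 zb))
    (hV₂' : ContinuousOn (deriv V₂) (Set.Icc 0 zb))
    (hV₂'' : ∀ z ∈ Set.Ioo 0 zb, DifferentiableAt ℝ (deriv V₂) z)
    (hV₂''c : ContinuousOn (deriv (deriv V₂)) (Set.Ioo 0 zb))
    (heq₁ : ∀ z ∈ Set.Ioo 0 zb,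
      -(σ^2/2) * deriv (deriv V₁) z + ρ * V₁ z -
        ((1-γ) * (γ/w) ^ (γ/(1-γ)) * (max 0 (deriv V₁ z)) ^ (1/(1-γ))
          + k₁ * deriv V₁ z + z ^ α / B ^ (α-1)) = 0)
    (heq₂ : ∀ z ∈ Set.Ioo 0 zb,
      -(σ^2/2) * deriv (deriv V₂) z + ρ * V₂ z -
        ((1-γ) * (γ/w) ^ (γ/(1-γ)) * (max 0 (deriv V₂ z)) ^ (1/(1-γ))
          + k₂ * deriv V₂ z + z ^ α / B ^ (α-1)) = 0)
    (hbc₁0 : deriv V₁ 0 = 0) (hbc₁1 : deriv V₁ zb = 0)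
    (hbc₂0 : deriv V₂ 0 = 0) (hbc₂1 : deriv V₂ zb = 0)
    (hlt : k₁ < k₂)
    (hpos₁ : ∀ z ∈ Set.Ioo 0 zb, 0 < deriv V₁ z)
    (hpos₂ : ∀ z ∈ Set.Ioo 0 zb, 0 < deriv V₂ z) :
    ∀ z ∈ Set.Icc 0 zb, V₁ z < V₂ z :=
  stmt_5_general zb σ ρ w B α γ hz hσ hρ hγ k₁ k₂ V₁ V₂ hV₁ hV₁' hV₁'' hV₂ hV₂' hV₂'' heq₁ heq₂
    hbc₁0 hbc₁1 hbc₂0 hbc₂1 hlt hpos₁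
end

section
/- For k₁, k₂ ≥ 0 let V^{k₁}, V^{k₂} be classical solutions of the auxiliary HJB equation with Neumann boundary conditions on [0, z̄], each satisfying 0 ≤ V^{k_i} ≤ z̄^α/(ρ B^{α-1}), 0 ≤ (V^{k_i})' ≤ M with M = [z̄^α/((1-γ)B^{α-1})]^{1-γ}(w/γ)^γ, and ‖V^{k₁} - V^{k₂}‖_∞ ≤ (M/ρ)|k₁-k₂|. Then ‖(V^{k₁})' - (V^{k₂})'‖_∞ ≤ (4 z̄ / σ²) M |k₁ - k₂|. -/
/-!
Write `u = V₁' - V₂'`. Subtracting the two HJB equations expresses `(σ²/2) u''` through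
`ρ (V₁ - V₂)`, the difference of the Hamiltonian terms, `k₁ u` and `(k₁ - k₂) V₂'`. Wherever
`u > 0`, the monotone Hamiltonian term and `k₁ u` only decrease `u''`, so
`(σ²/2) u'' ≤ ρ |V₁ - V₂| + |k₁ - k₂| M ≤ 2 M |k₁ - k₂|`. Since `u(0) = 0`, the mean value
theorem between the last point before `z` where `u ≤ 0` and `z` gives
`u(z) ≤ (4 M |k₁ - k₂| / σ²) z`. Exchanging the roles of the two solutions bounds `-u`.
-/

open Set

theorem image_le_mul_sub_of_deriv_le_of_pos {u u' : ℝ → ℝ} {a b C : ℝ}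
    (hu : ContinuousOn u (Icc a b)) (hu' : ∀ x ∈ Ioo a b, HasDerivAt u (u' x) x)
    (ha : u a ≤ 0) (hC : 0 ≤ C) (bound : ∀ x ∈ Ioo a b, 0 < u x → u' x ≤ C) :
    ∀ x ∈ Icc a b, u x ≤ C * (x - a) := by
  intro x hx
  rcases le_or_gt (u x) 0 with hux | hux
  · nlinarith [hx.1]
  have hS : IsCompact (Icc a x ∩ u ⁻¹' Iic 0) :=
    isCompact_Icc.of_isClosed_subset
      ((hu.mono (Icc_subset_Icc_right hx.2)).preimage_isClosed_of_isClosed isClosed_Icc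
        isClosed_Iic)
      inter_subset_left
  obtain ⟨ζ, ⟨⟨hζa, hζx⟩, huζ⟩, hζ_last⟩ :=
    hS.exists_isGreatest ⟨a, left_mem_Icc.2 hx.1, ha⟩
  have hζx' : ζ < x := hζx.lt_of_ne (by rintro rfl; exact (not_le.2 hux) huζ)
  obtain ⟨c, hc, hc_slope⟩ := exists_hasDerivAt_eq_slope u u' hζx'
    (hu.mono (Icc_subset_Icc hζa hx.2))
    (fun y hy => hu' y ⟨hζa.trans_lt hy.1, hy.2.trans_le hx.2⟩)
  have huc : 0 < u c := by
    by_contra! h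
    exact not_le.2 hc.1 (hζ_last ⟨⟨hζa.trans hc.1.le, hc.2.le⟩, h⟩)
  have hslope : u x - u ζ ≤ C * (x - ζ) := by
    have := bound c ⟨hζa.trans_lt hc.1, hc.2.trans_le hx.2⟩ huc
    rwa [hc_slope, div_le_iff₀ (sub_pos.2 hζx')] at this
  have : C * (x - ζ) ≤ C * (x - a) := mul_le_mul_of_nonneg_left (by linarith) hC
  linarith [show u ζ ≤ 0 from huζ]

theorem monotone_hjb_hamiltonian {w γ : ℝ} (hw : 0 < w) (hγ : γ ∈ Ioo (0:ℝ) 1) :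
    Monotone fun p : ℝ => (1-γ) * (γ/w) ^ (γ/(1-γ)) * (max 0 p) ^ (1/(1-γ)) := by
  have h1γ : 0 < 1 - γ := sub_pos.2 hγ.2
  intro p q hpq
  have hcoeff : 0 ≤ (1-γ) * (γ/w) ^ (γ/(1-γ)) :=
    mul_nonneg h1γ.le (Real.rpow_nonneg (div_nonneg hγ.1.le hw.le) _)
  exact mul_le_mul_of_nonneg_left
    (Real.rpow_le_rpow (le_max_left _ _) (max_le_max le_rfl hpq) (by positivity)) hcoeff

/-- `vᵢ, pᵢ, qᵢ` stand for `Vᵢ, Vᵢ', Vᵢ''` at one point and `f` for the common source term. -/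
theorem hjb_second_deriv_sub_le {σ ρ w γ k₁ k₂ M v₁ v₂ p₁ p₂ q₁ q₂ f : ℝ}
    (hρ : 0 < ρ) (hw : 0 < w) (hγ : γ ∈ Ioo (0:ℝ) 1) (hk₁ : 0 ≤ k₁)
    (e₁ : -(σ^2/2) * q₁ + ρ * v₁ -
      ((1-γ) * (γ/w) ^ (γ/(1-γ)) * (max 0 p₁) ^ (1/(1-γ)) + k₁ * p₁ + f) = 0)
    (e₂ : -(σ^2/2) * q₂ + ρ * v₂ -
      ((1-γ) * (γ/w) ^ (γ/(1-γ)) * (max 0 p₂) ^ (1/(1-γ)) + k₂ * p₂ + f) = 0)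
    (hp : p₂ ≤ p₁) (hp₂ : 0 ≤ p₂ ∧ p₂ ≤ M) (hv : |v₁ - v₂| ≤ M / ρ * |k₁ - k₂|) :
    σ^2/2 * (q₁ - q₂) ≤ 2 * M * |k₁ - k₂| := by
  have hH := monotone_hjb_hamiltonian hw hγ hp
  have hkp : 0 ≤ k₁ * (p₁ - p₂) := mul_nonneg hk₁ (sub_nonneg.2 hp)
  have hρv : ρ * (v₁ - v₂) ≤ M * |k₁ - k₂| := by
    calc ρ * (v₁ - v₂) ≤ ρ * (M / ρ * |k₁ - k₂|) :=
          mul_le_mul_of_nonneg_left (le_of_abs_le hv) hρ.le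
      _ = M * |k₁ - k₂| := by field_simp
  have hdrift : -((k₁ - k₂) * p₂) ≤ M * |k₁ - k₂| := by
    calc -((k₁ - k₂) * p₂) ≤ |k₁ - k₂| * p₂ := by
          rw [neg_le, ← neg_mul]
          exact mul_le_mul_of_nonneg_right (neg_abs_le _) hp₂.1
      _ ≤ M * |k₁ - k₂| := by rw [mul_comm]; exact mul_le_mul_of_nonneg_right hp₂.2 (abs_nonneg _)
  simp only at hH
  linarith

theorem deriv_sub_deriv_le_of_hjb {zb σ ρ w B α γ k₁ k₂ M : ℝ} {V₁ V₂ : ℝ → ℝ}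
    (hσ : 0 < σ) (hρ : 0 < ρ) (hw : 0 < w) (hγ : γ ∈ Ioo (0:ℝ) 1) (hk₁ : 0 ≤ k₁)
    (hV₁' : ContinuousOn (deriv V₁) (Icc 0 zb))
    (hV₁'' : ∀ z ∈ Ioo 0 zb, DifferentiableAt ℝ (deriv V₁) z)
    (hV₂' : ContinuousOn (deriv V₂) (Icc 0 zb))
    (hV₂'' : ∀ z ∈ Ioo 0 zb, DifferentiableAt ℝ (deriv V₂) z)
    (heq₁ : ∀ z ∈ Ioo 0 zb,
      -(σ^2/2) * deriv (deriv V₁) z + ρ * V₁ z -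
        ((1-γ) * (γ/w) ^ (γ/(1-γ)) * (max 0 (deriv V₁ z)) ^ (1/(1-γ))
          + k₁ * deriv V₁ z + z ^ α / B ^ (α-1)) = 0)
    (heq₂ : ∀ z ∈ Ioo 0 zb,
      -(σ^2/2) * deriv (deriv V₂) z + ρ * V₂ z -
        ((1-γ) * (γ/w) ^ (γ/(1-γ)) * (max 0 (deriv V₂ z)) ^ (1/(1-γ))
          + k₂ * deriv V₂ z + z ^ α / B ^ (α-1)) = 0)
    (hbc : deriv V₁ 0 = deriv V₂ 0) (hM : 0 ≤ M)
    (hgrad₂ : ∀ z ∈ Icc 0 zb, 0 ≤ deriv V₂ z ∧ deriv V₂ z ≤ M)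
    (hdist : ∀ z ∈ Icc 0 zb, |V₁ z - V₂ z| ≤ M / ρ * |k₁ - k₂|) :
    ∀ z ∈ Icc 0 zb, deriv V₁ z - deriv V₂ z ≤ 4 * zb / σ^2 * M * |k₁ - k₂| := by
  have hσ2 : 0 < σ^2 := by positivity
  have hgrowth := image_le_mul_sub_of_deriv_le_of_pos (u := fun x => deriv V₁ x - deriv V₂ x)
    (u' := fun x => deriv (deriv V₁) x - deriv (deriv V₂) x) (C := 4 / σ^2 * M * |k₁ - k₂|)
    (hV₁'.sub hV₂') (fun x hx => (hV₁'' x hx).hasDerivAt.sub (hV₂'' x hx).hasDerivAt)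
    (by simp [hbc]) (by positivity) (fun x hx hux => by
      have hx' : x ∈ Icc 0 zb := Ioo_subset_Icc_self hx
      have := hjb_second_deriv_sub_le hρ hw hγ hk₁ (heq₁ x hx) (heq₂ x hx) (by linarith)
        (hgrad₂ x hx') (hdist x hx')
      rw [show 4 / σ^2 * M * |k₁ - k₂| = 2 * M * |k₁ - k₂| / (σ^2/2) by field_simp; ring,
        le_div_iff₀ (by positivity)]
      linarith)
  intro z hz
  calc deriv V₁ z - deriv V₂ z ≤ 4 / σ^2 * M * |k₁ - k₂| * (z - 0) := hgrowth z hz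
    _ ≤ 4 / σ^2 * M * |k₁ - k₂| * zb := by gcongr; linarith [hz.2]
    _ = 4 * zb / σ^2 * M * |k₁ - k₂| := by ring

theorem stmt_6_general (zb σ ρ w B α γ : ℝ)
    (hσ : 0 < σ) (hρ : 0 < ρ) (hw : 0 < w)
    (hγ : γ ∈ Set.Ioo (0:ℝ) 1)
    (k₁ k₂ : ℝ) (hk₁ : 0 ≤ k₁) (hk₂ : 0 ≤ k₂)
    (V₁ V₂ : ℝ → ℝ)
    (hV₁' : ContinuousOn (deriv V₁) (Set.Icc 0 zb))
    (hV₁'' : ∀ z ∈ Set.Ioo 0 zb, DifferentiableAt ℝ (deriv V₁) z)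
    (hV₂' : ContinuousOn (deriv V₂) (Set.Icc 0 zb))
    (hV₂'' : ∀ z ∈ Set.Ioo 0 zb, DifferentiableAt ℝ (deriv V₂) z)
    (heq₁ : ∀ z ∈ Set.Ioo 0 zb,
      -(σ^2/2) * deriv (deriv V₁) z + ρ * V₁ z -
        ((1-γ) * (γ/w) ^ (γ/(1-γ)) * (max 0 (deriv V₁ z)) ^ (1/(1-γ))
          + k₁ * deriv V₁ z + z ^ α / B ^ (α-1)) = 0)
    (heq₂ : ∀ z ∈ Set.Ioo 0 zb,
      -(σ^2/2) * deriv (deriv V₂) z + ρ * V₂ z -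
        ((1-γ) * (γ/w) ^ (γ/(1-γ)) * (max 0 (deriv V₂ z)) ^ (1/(1-γ))
          + k₂ * deriv V₂ z + z ^ α / B ^ (α-1)) = 0)
    (hbc₁0 : deriv V₁ 0 = 0)
    (hbc₂0 : deriv V₂ 0 = 0)
    (M : ℝ)
    (hgrad₁ : ∀ z ∈ Set.Icc 0 zb, 0 ≤ deriv V₁ z ∧ deriv V₁ z ≤ M)
    (hgrad₂ : ∀ z ∈ Set.Icc 0 zb, 0 ≤ deriv V₂ z ∧ deriv V₂ z ≤ M)
    (hdist : ∀ z ∈ Set.Icc 0 zb, |V₁ z - V₂ z| ≤ M / ρ * |k₁ - k₂|) :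
    ∀ z ∈ Set.Icc 0 zb,
      |deriv V₁ z - deriv V₂ z| ≤ 4 * zb / σ^2 * M * |k₁ - k₂| := by
  intro z hz
  have hM : 0 ≤ M := (hgrad₁ z hz).1.trans (hgrad₁ z hz).2
  have h₁₂ := deriv_sub_deriv_le_of_hjb hσ hρ hw hγ hk₁ hV₁' hV₁'' hV₂' hV₂'' heq₁ heq₂
    (hbc₁0.trans hbc₂0.symm) hM hgrad₂ hdist z hz
  have h₂₁ := deriv_sub_deriv_le_of_hjb hσ hρ hw hγ hk₂ hV₂' hV₂'' hV₁' hV₁'' heq₂ heq₁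
    (hbc₂0.trans hbc₁0.symm) hM hgrad₁
    (fun x hx => by rw [abs_sub_comm, abs_sub_comm k₂]; exact hdist x hx) z hz
  rw [abs_sub_comm k₂] at h₂₁
  exact abs_sub_le_iff.2 ⟨h₁₂, h₂₁⟩

/-- Lipschitz dependence of the gradient of the HJB solution
on the drift parameter k. -/
theorem stmt_6 (zb σ ρ w B α γ : ℝ)
(hz : 0 < zb) (hσ : 0 < σ) (hρ : 0 < ρ) (hw : 0 < w) (hB : 0 < B)
    (hα : α ∈ Set.Ioo (0:ℝ) 1) (hγ : γ ∈ Set.Ioo (0:ℝ) 1)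
    (k₁ k₂ : ℝ) (hk₁ : 0 ≤ k₁) (hk₂ : 0 ≤ k₂)
    (V₁ V₂ : ℝ → ℝ)
    (hV₁ : DifferentiableOn ℝ V₁ (Set.Icc 0 zb))
    (hV₁' : ContinuousOn (deriv V₁) (Set.Icc 0 zb))
    (hV₁'' : ∀ z ∈ Set.Ioo 0 zb, DifferentiableAt ℝ (deriv V₁) z)
    (hV₁''c : ContinuousOn (deriv (deriv V₁)) (Set.Ioo 0 zb))
    (hV₂ : DifferentiableOn ℝ V₂ (Set.Icc 0 zb))
    (hV₂' : ContinuousOn (deriv V₂) (Set.Icc 0 zb))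
    (hV₂'' : ∀ z ∈ Set.Ioo 0 zb, DifferentiableAt ℝ (deriv V₂) z)
    (hV₂''c : ContinuousOn (deriv (deriv V₂)) (Set.Ioo 0 zb))
    (heq₁ : ∀ z ∈ Set.Ioo 0 zb,
      -(σ^2/2) * deriv (deriv V₁) z + ρ * V₁ z -
        ((1-γ) * (γ/w) ^ (γ/(1-γ)) * (max 0 (deriv V₁ z)) ^ (1/(1-γ))
          + k₁ * deriv V₁ z + z ^ α / B ^ (α-1)) = 0)
    (heq₂ : ∀ z ∈ Set.Ioo 0 zb,
      -(σ^2/2) * deriv (deriv V₂) z + ρ * V₂ z -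
        ((1-γ) * (γ/w) ^ (γ/(1-γ)) * (max 0 (deriv V₂ z)) ^ (1/(1-γ))
          + k₂ * deriv V₂ z + z ^ α / B ^ (α-1)) = 0)
    (hbc₁0 : deriv V₁ 0 = 0) (hbc₁1 : deriv V₁ zb = 0)
    (hbc₂0 : deriv V₂ 0 = 0) (hbc₂1 : deriv V₂ zb = 0)
    (M : ℝ) (hM : M = (zb ^ α / ((1-γ) * B ^ (α-1))) ^ (1-γ) * (w/γ) ^ γ)
    (hval₁ : ∀ z ∈ Set.Icc 0 zb, 0 ≤ V₁ z ∧ V₁ z ≤ zb ^ α / (ρ * B ^ (α-1)))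
    (hval₂ : ∀ z ∈ Set.Icc 0 zb, 0 ≤ V₂ z ∧ V₂ z ≤ zb ^ α / (ρ * B ^ (α-1)))
    (hgrad₁ : ∀ z ∈ Set.Icc 0 zb, 0 ≤ deriv V₁ z ∧ deriv V₁ z ≤ M)
    (hgrad₂ : ∀ z ∈ Set.Icc 0 zb, 0 ≤ deriv V₂ z ∧ deriv V₂ z ≤ M)
    (hdist : ∀ z ∈ Set.Icc 0 zb, |V₁ z - V₂ z| ≤ M / ρ * |k₁ - k₂|) :
    ∀ z ∈ Set.Icc 0 zb,
      |deriv V₁ z - deriv V₂ z| ≤ 4 * zb / σ^2 * M * |k₁ - k₂| :=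
  stmt_6_general zb σ ρ w B α γ hσ hρ hw hγ k₁ k₂ hk₁ hk₂ V₁ V₂ hV₁' hV₁'' hV₂' hV₂'' heq₁ heq₂
    hbc₁0 hbc₂0 M hgrad₁ hgrad₂ hdist
end

section
/- Let V^k be a classical solution of the auxiliary HJB equation in C^{2,τ}([0, z̄]) with Neumann boundary conditions, satisfying (V^k)' > 0 in (0, z̄). Then (V^k)''(0) > 0 and (V^k)''(z̄) < 0. -/
/-!
With the Neumann condition the Hamiltonian vanishes at the endpoints, so the equation reads
`σ²/2 · V''(0) = ρ V(0)` and `σ²/2 · V''(z̄) = ρ V(z̄) - z̄^α / B^(α-1)`.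

If `V''(0) ≤ 0`, then for small `z > 0` the equation gives
`σ²/2 · V''(z) ≤ ρ (V(z) - V(0)) - z^α / B^(α-1) ≤ 0`, since `V(z) - V(0) = o(z)` and `z ≤ z^α`.
So `V'` is nonincreasing near `0`, contradicting `V'(0) = 0 < V'`.

If `V''(z̄) ≥ 0`, then near `z̄` the decrease of `z^α`, of slope `α z̄^(α-1)`, dominates both
`ρ (V(z) - V(z̄)) = o(z̄ - z)` and the Hamiltonian, which is at most a multiple of
`V'(z) ≤ V''(z̄) (z - z̄) + o(z̄ - z)`. So `V'` is nondecreasing near `z̄`, contradicting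
`V'(z̄) = 0 < V'`.
-/

open Set Filter Topology

section EndpointCalculus

variable {E : Type*} [NormedAddCommGroup E] [NormedSpace ℝ E] {f : ℝ → E} {a b : ℝ}

theorem hasDerivWithinAt_Ici_of_continuousOn_deriv (hab : a < b) (hf : ContinuousOn f (Icc a b))
    (hd : DifferentiableOn ℝ f (Ioo a b)) (hf' : ContinuousOn (deriv f) (Icc a b)) :
    HasDerivWithinAt f (deriv f a) (Ici a) a := by
  have hlim := (hf' a (left_mem_Icc.2 hab.le)).mono Ioo_subset_Icc_self
  rw [ContinuousWithinAt, nhdsWithin_Ioo_eq_nhdsGT hab] at hlim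
  exact hasDerivWithinAt_Ici_of_tendsto_deriv hd
    ((hf a (left_mem_Icc.2 hab.le)).mono Ioo_subset_Icc_self) (Ioo_mem_nhdsGT hab) hlim

theorem hasDerivWithinAt_Iic_of_continuousOn_deriv (hab : a < b) (hf : ContinuousOn f (Icc a b))
    (hd : DifferentiableOn ℝ f (Ioo a b)) (hf' : ContinuousOn (deriv f) (Icc a b)) :
    HasDerivWithinAt f (deriv f b) (Iic b) b := by
  have hlim := (hf' b (right_mem_Icc.2 hab.le)).mono Ioo_subset_Icc_self
  rw [ContinuousWithinAt, nhdsWithin_Ioo_eq_nhdsLT hab] at hlim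
  exact hasDerivWithinAt_Iic_of_tendsto_deriv hd
    ((hf b (right_mem_Icc.2 hab.le)).mono Ioo_subset_Icc_self) (Ioo_mem_nhdsLT hab) hlim

end EndpointCalculus

section Monotonicity

variable {f : ℝ → ℝ} {a b : ℝ}

theorem not_eventually_deriv_nonpos_nhdsGT (hab : a < b) (hf : ContinuousOn f (Icc a b))
    (hd : DifferentiableOn ℝ f (Ioo a b)) (hlt : ∀ x ∈ Ioo a b, f a < f x) :
    ¬ ∀ᶠ x in 𝓝[>] a, deriv f x ≤ 0 := by
  intro h
  obtain ⟨u, hu, hsub⟩ := mem_nhdsGT_iff_exists_Ioo_subset.1 h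
  set d := min u b
  have had : a < d := lt_min hu hab
  have hdb : d ≤ b := min_le_right u b
  have hanti : AntitoneOn f (Icc a d) := by
    refine antitoneOn_of_deriv_nonpos (convex_Icc a d) (hf.mono (Icc_subset_Icc_right hdb))
      (by rw [interior_Icc]; exact hd.mono (Ioo_subset_Ioo_right hdb)) fun x hx => ?_
    rw [interior_Icc] at hx
    exact hsub ⟨hx.1, hx.2.trans_le (min_le_left u b)⟩
  have hmid : (a + d) / 2 ∈ Ioo a d := ⟨by linarith, by linarith⟩
  exact (hanti (left_mem_Icc.2 had.le) (Ioo_subset_Icc_self hmid) hmid.1.le).not_gt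
    (hlt _ ⟨hmid.1, hmid.2.trans_le hdb⟩)

theorem not_eventually_deriv_nonneg_nhdsLT (hab : a < b) (hf : ContinuousOn f (Icc a b))
    (hd : DifferentiableOn ℝ f (Ioo a b)) (hlt : ∀ x ∈ Ioo a b, f b < f x) :
    ¬ ∀ᶠ x in 𝓝[<] b, 0 ≤ deriv f x := by
  intro h
  obtain ⟨l, hl, hsub⟩ := mem_nhdsLT_iff_exists_Ioo_subset.1 h
  set d := max l a
  have hdb : d < b := max_lt hl hab
  have had : a ≤ d := le_max_right l a
  have hmono : MonotoneOn f (Icc d b) := by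
    refine monotoneOn_of_deriv_nonneg (convex_Icc d b) (hf.mono (Icc_subset_Icc_left had))
      (by rw [interior_Icc]; exact hd.mono (Ioo_subset_Ioo_left had)) fun x hx => ?_
    rw [interior_Icc] at hx
    exact hsub ⟨(le_max_left l a).trans_lt hx.1, hx.2⟩
  have hmid : (d + b) / 2 ∈ Ioo d b := ⟨by linarith, by linarith⟩
  exact (hmono (Ioo_subset_Icc_self hmid) (right_mem_Icc.2 hdb.le) hmid.2.le).not_gt
    (hlt _ ⟨had.trans_lt hmid.1, hmid.2⟩)

end Monotonicity

theorem HasDerivWithinAt.eventually_abs_sub_sub_le {f : ℝ → ℝ} {f' x ε : ℝ} {s : Set ℝ}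
    (hf : HasDerivWithinAt f f' s x) (hε : 0 < ε) :
    ∀ᶠ y in 𝓝[s] x, |f y - f x - (y - x) * f'| ≤ ε * |y - x| := by
  simpa only [Real.norm_eq_abs, smul_eq_mul] using
    (hasDerivWithinAt_iff_isLittleO.1 hf).def hε

noncomputable def hjbHamiltonian (w k γ p : ℝ) : ℝ :=
  (1 - γ) * (γ / w) ^ (γ / (1 - γ)) * (max 0 p) ^ (1 / (1 - γ)) + k * p

noncomputable def hjbResidual (σ ρ w B k α γ : ℝ) (V : ℝ → ℝ) (z : ℝ) : ℝ :=
  -(σ ^ 2 / 2) * deriv (deriv V) z + ρ * V z -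
    (hjbHamiltonian w k γ (deriv V z) + z ^ α / B ^ (α - 1))

section HJB

variable {σ ρ w B k α γ : ℝ} {V : ℝ → ℝ}

theorem hjbHamiltonian_zero : hjbHamiltonian w k γ 0 = 0 := by
  rcases eq_or_ne γ 1 with rfl | hγ
  · simp [hjbHamiltonian]
  · simp [hjbHamiltonian, Real.zero_rpow (inv_ne_zero (sub_ne_zero.2 hγ.symm))]

theorem hjbHamiltonian_nonneg (hw : 0 ≤ w) (hk : 0 ≤ k) (hγ0 : 0 ≤ γ) (hγ1 : γ ≤ 1) {p : ℝ}
    (hp : 0 ≤ p) : 0 ≤ hjbHamiltonian w k γ p := by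
  have : 0 ≤ 1 - γ := by linarith
  exact add_nonneg (by positivity) (mul_nonneg hk hp)

theorem hjbHamiltonian_le_mul (hw : 0 ≤ w) (hγ0 : 0 ≤ γ) (hγ1 : γ < 1) {p : ℝ}
    (hp0 : 0 ≤ p) (hp1 : p ≤ 1) :
    hjbHamiltonian w k γ p ≤ ((1 - γ) * (γ / w) ^ (γ / (1 - γ)) + k) * p := by
  have h1γ : 0 < 1 - γ := by linarith
  have hpow : p ^ (1 / (1 - γ)) ≤ p :=
    Real.rpow_le_self_of_le_one hp0 hp1 (by rw [le_div_iff₀ h1γ]; linarith)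
  have hc : 0 ≤ (1 - γ) * (γ / w) ^ (γ / (1 - γ)) := by positivity
  unfold hjbHamiltonian
  rw [max_eq_right hp0, add_mul]
  exact add_le_add_left (mul_le_mul_of_nonneg_left hpow hc) _

theorem continuousOn_hjbResidual {s : Set ℝ} (hα : 0 ≤ α) (hγ : γ ≤ 1) (hV : ContinuousOn V s)
    (hV' : ContinuousOn (deriv V) s) (hV'' : ContinuousOn (deriv (deriv V)) s) :
    ContinuousOn (hjbResidual σ ρ w B k α γ V) s := by
  have hq : 0 ≤ 1 / (1 - γ) := div_nonneg zero_le_one (by linarith)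
  unfold hjbResidual hjbHamiltonian
  refine ((continuousOn_const.mul hV'').add (continuousOn_const.mul hV)).sub
    (((continuousOn_const.mul ((continuousOn_const.sup hV').rpow_const fun _ _ => Or.inr hq)).add
      (continuousOn_const.mul hV')).add ?_)
  exact (continuousOn_id.rpow_const fun _ _ => Or.inr hα).div_const _

theorem hjbResidual_eq_zero_iff {z : ℝ} :
    hjbResidual σ ρ w B k α γ V z = 0 ↔
      σ ^ 2 / 2 * deriv (deriv V) z =
        ρ * V z - hjbHamiltonian w k γ (deriv V z) - z ^ α / B ^ (α - 1) := by
  unfold hjbResidual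
  constructor <;> intro h <;> linarith

theorem eventually_deriv_deriv_nonpos_of_hjbResidual_eq_zero (hσ : σ ≠ 0) (hB : 0 < B)
    (hw : 0 ≤ w) (hk : 0 ≤ k) (hγ0 : 0 ≤ γ) (hγ1 : γ ≤ 1) (hα0 : 0 < α) (hα1 : α ≤ 1)
    {zb : ℝ} (hz : 0 < zb) (hres : ∀ z ∈ Ico 0 zb, hjbResidual σ ρ w B k α γ V z = 0)
    (hV : HasDerivWithinAt V 0 (Ioi 0) 0) (hV0 : deriv V 0 = 0)
    (hpos : ∀ z ∈ Ioo 0 zb, 0 ≤ deriv V z) (hneg : deriv (deriv V) 0 ≤ 0) :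
    ∀ᶠ z in 𝓝[>] 0, deriv (deriv V) z ≤ 0 := by
  set P := B ^ (α - 1)
  have hP : 0 < P := Real.rpow_pos_of_pos hB _
  have hσ2 : 0 < σ ^ 2 / 2 := by positivity
  have h0 : σ ^ 2 / 2 * deriv (deriv V) 0 = ρ * V 0 := by
    simpa [hV0, hjbHamiltonian_zero, Real.zero_rpow hα0.ne'] using
      hjbResidual_eq_zero_iff.1 (hres 0 ⟨le_rfl, hz⟩)
  filter_upwards [(hV.const_mul ρ).eventually_abs_sub_sub_le (inv_pos.2 hP),
    Ioo_mem_nhdsGT (lt_min hz one_pos)] with z hlin hmem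
  have hzb : z ∈ Ioo 0 zb := ⟨hmem.1, hmem.2.trans_le (min_le_left _ _)⟩
  have hz1 : z ≤ 1 := (hmem.2.trans_le (min_le_right _ _)).le
  have hVz : ρ * V z - ρ * V 0 ≤ z / P := by
    rw [mul_zero, mul_zero, sub_zero, sub_zero, abs_of_pos hmem.1, inv_mul_eq_div] at hlin
    exact (le_abs_self _).trans hlin
  have hzα : z / P ≤ z ^ α / P :=
    div_le_div_of_nonneg_right (Real.self_le_rpow_of_le_one hmem.1.le hz1 hα1) hP.le
  have hH := hjbHamiltonian_nonneg hw hk hγ0 hγ1 (hpos z hzb)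
  have heq := hjbResidual_eq_zero_iff.1 (hres z (Ioo_subset_Ico_self hzb))
  refine nonpos_of_mul_nonpos_right ?_ hσ2
  nlinarith [mul_nonpos_of_nonneg_of_nonpos hσ2.le hneg]

theorem eventually_deriv_deriv_nonneg_of_hjbResidual_eq_zero (hσ : σ ≠ 0) (hB : 0 < B)
    (hw : 0 ≤ w) (hk : 0 ≤ k) (hγ0 : 0 ≤ γ) (hγ1 : γ < 1) (hα0 : 0 < α)
    {zb : ℝ} (hz : 0 < zb) (hres : ∀ z ∈ Ioc 0 zb, hjbResidual σ ρ w B k α γ V z = 0)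
    (hV : HasDerivWithinAt V 0 (Iio zb) zb)
    (hW : HasDerivWithinAt (deriv V) (deriv (deriv V) zb) (Iio zb) zb) (hWzb : deriv V zb = 0)
    (hpos : ∀ z ∈ Ioo 0 zb, 0 ≤ deriv V z) (hnn : 0 ≤ deriv (deriv V) zb) :
    ∀ᶠ z in 𝓝[<] zb, 0 ≤ deriv (deriv V) z := by
  set P := B ^ (α - 1)
  have hP : 0 < P := Real.rpow_pos_of_pos hB _
  have hσ2 : 0 < σ ^ 2 / 2 := by positivity
  set A := α * zb ^ (α - 1) / P
  have hA : 0 < A := by positivity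
  set c := (1 - γ) * (γ / w) ^ (γ / (1 - γ)) + k
  have hc : 0 ≤ c := add_nonneg (mul_nonneg (by linarith) (by positivity)) hk
  set ε := A / (2 * (c + 1))
  have hcε : c * ε ≤ A / 2 := by
    rw [mul_div_assoc', div_le_div_iff₀ (by positivity) two_pos]
    nlinarith
  have hG : HasDerivWithinAt (fun z => ρ * V z - z ^ α / P) (ρ * 0 - A) (Iio zb) zb :=
    (hV.const_mul ρ).sub
      ((Real.hasDerivAt_rpow_const (Or.inl hz.ne')).hasDerivWithinAt.div_const P)
  have hGzb : 0 ≤ ρ * V zb - zb ^ α / P := by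
    have h := hjbResidual_eq_zero_iff.1 (hres zb ⟨hz, le_rfl⟩)
    rw [hWzb, hjbHamiltonian_zero, sub_zero] at h
    rw [← h]; positivity
  filter_upwards [hG.eventually_abs_sub_sub_le (half_pos hA),
    hW.eventually_abs_sub_sub_le (show 0 < ε by positivity),
    hW.continuousWithinAt.tendsto.eventually_lt_const (hWzb ▸ one_pos),
    Ioo_mem_nhdsLT hz] with z hGz hWz hW1 hzb
  have ht : |z - zb| = zb - z := by rw [abs_sub_comm, abs_of_pos (sub_pos.2 hzb.2)]
  rw [ht] at hGz
  rw [ht, hWzb] at hWz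
  have hGlow : A / 2 * (zb - z) ≤ ρ * V z - z ^ α / P := by
    have := (abs_le.1 hGz).1
    nlinarith
  have hWup : deriv V z ≤ ε * (zb - z) := by
    have := (abs_le.1 hWz).2
    nlinarith [mul_nonneg hnn (sub_pos.2 hzb.2).le]
  have hH : hjbHamiltonian w k γ (deriv V z) ≤ c * deriv V z :=
    hjbHamiltonian_le_mul hw hγ0 hγ1 (hpos z hzb) hW1.le
  have heq := hjbResidual_eq_zero_iff.1 (hres z (Ioo_subset_Ioc_self hzb))
  refine nonneg_of_mul_nonneg_right ?_ hσ2
  nlinarith [mul_le_mul_of_nonneg_left hWup hc,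
    mul_le_mul_of_nonneg_right hcε (sub_pos.2 hzb.2).le]

end HJB

theorem stmt_7_general (zb σ ρ w B k α γ : ℝ)
    (hz : 0 < zb) (hσ : 0 < σ) (hw : 0 < w) (hB : 0 < B)
    (hk : 0 ≤ k) (hα : α ∈ Set.Ioo (0:ℝ) 1) (hγ : γ ∈ Set.Ioo (0:ℝ) 1)
    (V : ℝ → ℝ)
    (hV : DifferentiableOn ℝ V (Set.Icc 0 zb))
    (hV' : ContinuousOn (deriv V) (Set.Icc 0 zb))
    (hV'' : ∀ z ∈ Set.Ioo 0 zb, DifferentiableAt ℝ (deriv V) z)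
    (hV''c : ContinuousOn (deriv (deriv V)) (Set.Icc 0 zb))
    (heq : ∀ z ∈ Set.Ioo 0 zb,
      -(σ^2/2) * deriv (deriv V) z + ρ * V z -
        ((1-γ) * (γ/w) ^ (γ/(1-γ)) * (max 0 (deriv V z)) ^ (1/(1-γ))
          + k * deriv V z + z ^ α / B ^ (α-1)) = 0)
    (hbc0 : deriv V 0 = 0) (hbc1 : deriv V zb = 0)
    (hpos : ∀ z ∈ Set.Ioo 0 zb, 0 < deriv V z) :
    0 < deriv (deriv V) 0 ∧ deriv (deriv V) zb < 0 := by
  obtain ⟨hα0, hα1⟩ := hα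
  obtain ⟨hγ0, hγ1⟩ := hγ
  have hVd : DifferentiableOn ℝ V (Ioo 0 zb) := hV.mono Ioo_subset_Icc_self
  have hWd : DifferentiableOn ℝ (deriv V) (Ioo 0 zb) := fun z hz =>
    (hV'' z hz).differentiableWithinAt
  have hres : EqOn (hjbResidual σ ρ w B k α γ V) 0 (Icc 0 zb) :=
    EqOn.of_subset_closure heq (continuousOn_hjbResidual hα0.le hγ1.le hV.continuousOn hV' hV''c)
      continuousOn_const Ioo_subset_Icc_self (closure_Ioo hz.ne).ge
  have hnonneg : ∀ z ∈ Ioo 0 zb, 0 ≤ deriv V z := fun z hz => (hpos z hz).le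
  constructor
  · by_contra! hneg
    have hV0 := hasDerivWithinAt_Ici_of_continuousOn_deriv hz hV.continuousOn hVd hV'
    rw [hbc0] at hV0
    exact not_eventually_deriv_nonpos_nhdsGT hz hV' hWd (by simpa [hbc0] using hpos)
      (eventually_deriv_deriv_nonpos_of_hjbResidual_eq_zero hσ.ne' hB hw.le hk hγ0.le hγ1.le
        hα0 hα1.le hz (fun z hz => hres (Ico_subset_Icc_self hz))
        (hV0.mono Ioi_subset_Ici_self) hbc0 hnonneg hneg)
  · by_contra! hnn
    have hVzb := hasDerivWithinAt_Iic_of_continuousOn_deriv hz hV.continuousOn hVd hV'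
    rw [hbc1] at hVzb
    have hWzb := hasDerivWithinAt_Iic_of_continuousOn_deriv hz hV' hWd hV''c
    exact not_eventually_deriv_nonneg_nhdsLT hz hV' hWd (by simpa [hbc1] using hpos)
      (eventually_deriv_deriv_nonneg_of_hjbResidual_eq_zero hσ.ne' hB hw.le hk hγ0.le hγ1
        hα0 hz (fun z hz => hres (Ioc_subset_Icc_self hz)) (hVzb.mono Iio_subset_Iic_self)
        (hWzb.mono Iio_subset_Iic_self) hbc1 hnonneg hnn)

/-- For a C^{2,τ} solution of the auxiliary HJB equation with
strictly increasing value function in the interior, V''(0) > 0 and V''(z̄) < 0. -/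
theorem stmt_7 (zb σ ρ w B k α γ : ℝ)
    (hz : 0 < zb) (hσ : 0 < σ) (hρ : 0 < ρ) (hw : 0 < w) (hB : 0 < B)
    (hk : 0 ≤ k) (hα : α ∈ Set.Ioo (0:ℝ) 1) (hγ : γ ∈ Set.Ioo (0:ℝ) 1)
    (V : ℝ → ℝ)
    (hV : DifferentiableOn ℝ V (Set.Icc 0 zb))
    (hV' : ContinuousOn (deriv V) (Set.Icc 0 zb))
    (hV'' : ∀ z ∈ Set.Ioo 0 zb, DifferentiableAt ℝ (deriv V) z)
    (hV''c : ContinuousOn (deriv (deriv V)) (Set.Icc 0 zb))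
    (τ C : ℝ) (hτ : τ ∈ Set.Ioo (0:ℝ) 1) (hC : 0 ≤ C)
    (hHolder : ∀ x ∈ Set.Icc 0 zb, ∀ y ∈ Set.Icc 0 zb,
      |deriv (deriv V) x - deriv (deriv V) y| ≤ C * |x - y| ^ τ)
    (heq : ∀ z ∈ Set.Ioo 0 zb,
      -(σ^2/2) * deriv (deriv V) z + ρ * V z -
        ((1-γ) * (γ/w) ^ (γ/(1-γ)) * (max 0 (deriv V z)) ^ (1/(1-γ))
          + k * deriv V z + z ^ α / B ^ (α-1)) = 0)
    (hbc0 : deriv V 0 = 0) (hbc1 : deriv V zb = 0)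
    (hpos : ∀ z ∈ Set.Ioo 0 zb, 0 < deriv V z) :
    0 < deriv (deriv V) 0 ∧ deriv (deriv V) zb < 0 :=
  stmt_7_general zb σ ρ w B k α γ hz hσ hw hB hk hα hγ V hV hV' hV'' hV''c heq hbc0 hbc1 hpos
end
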